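/- arXiv:2603.05702 — 9 statements merged into one kernel-verified Lean document; each statement's English description precedes it below -/
import Mathlib

section
/- Let A be an n-by-n skew-symmetric matrix over a field K, let v ∈ Kⁿ, and let A_v be the (n+1)-by-(n+1) skew-symmetric matrix with A in the top-left block, v as the last column, -vᵀ as the last row, and 0 in the corner. Then for every subset I of [n], det((A + v vᵀ)[I]) = det(A_v[α(I)]), where [·] denotes the principal submatrix on the given index set and α(I) = I if |I| is even and α(I) = I ∪ {n+1} if |I| is odd. -/
open Matrix

/-- The principal submatrix of `M` on the index set `I` (with `det (psub M ∅) = 1`). -/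
def psub {m : Type*} {K : Type*} (M : Matrix m m K) (I : Finset m) :
    Matrix I I K := fun i j => M i.1 j.1

/-- The lift `α(I)`: `I` if `|I|` is even, `I ∪ {n+1}` if `|I|` is odd,
viewing `Fin n ⊆ Fin (n+1)` via `Fin.castSucc` and `n+1` as `Fin.last n`. -/
def alph {n : ℕ} (I : Finset (Fin n)) : Finset (Fin (n + 1)) :=
  if Even I.card then I.map Fin.castSuccEmb
  else insert (Fin.last n) (I.map Fin.castSuccEmb)

/-- The bordered matrix `A_v` with `A` in the top-left, `v` as the last column,
`-vᵀ` as the last row, and `0` in the corner. -/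
def bordered {n : ℕ} {K : Type*} [Field K]
    (A : Matrix (Fin n) (Fin n) K) (v : Fin n → K) :
    Matrix (Fin (n + 1)) (Fin (n + 1)) K := fun i j =>
  if hi : (i : ℕ) < n then
    if hj : (j : ℕ) < n then A ⟨i, hi⟩ ⟨j, hj⟩ else v ⟨i, hi⟩
  else
    if hj : (j : ℕ) < n then - v ⟨j, hj⟩ else 0

/-!
Put `B = A[I]` and `w = v|_I`. Expanding `det [[B, w], [-wᵀ, 1]]` along its last row, and
evaluating it by its Schur complement `B + w wᵀ`, gives
`det (B + w wᵀ) = det B + det [[B, w], [-wᵀ, 0]]`. Both `B` and `[[B, w], [-wᵀ, 0]]` are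
alternating, and an alternating matrix of odd size is singular, so according to the parity of `|I|`
exactly one summand survives; it is the principal minor of `A_v` on `α(I)`.
-/

open Finset

lemma Equiv.Perm.exists_fixed_of_mul_self_eq_one {ι : Type*} [Fintype ι] [DecidableEq ι]
    {σ : Equiv.Perm ι} (hσ : σ * σ = 1) (hodd : Odd (Fintype.card ι)) : ∃ i, σ i = i := by
  by_contra! hfree
  have hsupp : σ.support = univ := eq_univ_of_forall fun i => Equiv.Perm.mem_support.mpr (hfree i)
  have := Equiv.Perm.two_dvd_card_support (by rwa [sq])
  rw [hsupp, card_univ] at this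
  exact Nat.not_even_iff_odd.mpr hodd (even_iff_two_dvd.mpr this)

section Alternating

variable {ι R : Type*} [Fintype ι] [CommRing R] {M : Matrix ι ι R}

lemma prod_perm_inv_eq_neg_of_transpose_eq_neg (hT : Mᵀ = -M) (hodd : Odd (Fintype.card ι))
    (σ : Equiv.Perm ι) : ∏ i, M (σ⁻¹ i) i = -∏ i, M (σ i) i := by
  have hM : ∀ i j, M i j = -M j i := fun i j => by
    simpa using congrFun (congrFun hT j) i
  calc ∏ i, M (σ⁻¹ i) i = ∏ i, M i (σ i) := by
        rw [← Equiv.prod_comp σ]; simp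
    _ = ∏ i, (-1) * M (σ i) i := by simp_rw [hM _ (σ _), neg_one_mul]
    _ = -∏ i, M (σ i) i := by
        rw [prod_mul_distrib, prod_const, card_univ, hodd.neg_one_pow, neg_one_mul]

-- `σ` and `σ⁻¹` contribute opposite terms, and a self-inverse `σ` has a fixed point.
lemma det_eq_zero_of_transpose_eq_neg [DecidableEq ι] (hT : Mᵀ = -M) (hdiag : ∀ i, M i i = 0)
    (hodd : Odd (Fintype.card ι)) : M.det = 0 := by
  rw [det_apply]
  refine sum_ninvolution (· ⁻¹) (fun σ => ?_) (fun σ hσ hinv => hσ ?_)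
    (fun _ => mem_univ _) inv_inv
  · rw [Equiv.Perm.sign_inv, prod_perm_inv_eq_neg_of_transpose_eq_neg hT hodd, smul_neg,
      add_neg_cancel]
  · obtain ⟨i, hi⟩ := Equiv.Perm.exists_fixed_of_mul_self_eq_one
      (mul_eq_one_iff_eq_inv.mpr hinv.symm) hodd
    rw [prod_eq_zero (mem_univ i) (by rw [hi, hdiag]), smul_zero]

end Alternating

section Border

variable {ι R : Type*} [CommRing R]

def borderBlocks (B : Matrix ι ι R) (w : ι → R) : Matrix (ι ⊕ Unit) (ι ⊕ Unit) R :=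
  fromBlocks B (replicateCol Unit w) (-replicateRow Unit w) 0

lemma transpose_borderBlocks {B : Matrix ι ι R} (hT : Bᵀ = -B) (w : ι → R) :
    (borderBlocks B w)ᵀ = -borderBlocks B w := by
  simp [borderBlocks, fromBlocks_transpose, fromBlocks_neg, hT]

lemma borderBlocks_apply_self {B : Matrix ι ι R} (hdiag : ∀ i, B i i = 0) (w : ι → R) :
    ∀ i, borderBlocks B w i i = 0
  | .inl i => hdiag i
  | .inr _ => rfl

lemma det_add_vecMulVec_self [Fintype ι] [DecidableEq ι] (B : Matrix ι ι R) (w : ι → R) :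
    (B + vecMulVec w w).det = B.det + (borderBlocks B w).det := by
  set last : ι ⊕ Unit := .inr ()
  have hSchur : (borderBlocks B w).updateRow last (borderBlocks B w last + Pi.single last 1)
      = fromBlocks B (replicateCol Unit w) (-replicateRow Unit w) 1 := by
    ext (i | i) (j | j) <;> simp [borderBlocks, last, updateRow_apply]
  have hCorner : (borderBlocks B w).updateRow last (Pi.single last 1)
      = fromBlocks B (replicateCol Unit w) 0 1 := by
    ext (i | i) (j | j) <;> simp [borderBlocks, last, updateRow_apply]
  have := det_updateRow_add (borderBlocks B w) last (borderBlocks B w last) (Pi.single last 1)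
  rw [hSchur, hCorner, updateRow_eq_self, det_fromBlocks_one₂₂, det_fromBlocks_zero₂₁, det_one,
    mul_one, Matrix.mul_neg, sub_neg_eq_add, ← vecMulVec_eq] at this
  rw [this, add_comm]

end Border

lemma det_psub_image {ι m R : Type*} [Fintype ι] [DecidableEq ι] [DecidableEq m] [CommRing R]
    (M : Matrix m m R) {g : ι → m} (hg : Function.Injective g) :
    (psub M (univ.image g)).det = (M.submatrix g g).det := by
  let e : ι ≃ univ.image g := Equiv.ofBijective
    (fun i => ⟨g i, mem_image_of_mem g (mem_univ i)⟩)
    ⟨fun i j h => hg (congrArg Subtype.val h), fun ⟨x, hx⟩ => by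
      obtain ⟨i, -, rfl⟩ := mem_image.mp hx
      exact ⟨i, rfl⟩⟩
  exact (det_submatrix_equiv_self e _).symm

section Bordered

open Fin

variable {n : ℕ} {K : Type*} [Field K] (A : Matrix (Fin n) (Fin n) K) (v : Fin n → K)

@[simp]
lemma bordered_castSucc_castSucc (i j : Fin n) : bordered A v i.castSucc j.castSucc = A i j := by
  simp [bordered]

@[simp]
lemma bordered_castSucc_last (i : Fin n) : bordered A v i.castSucc (last n) = v i := by
  simp [bordered]

@[simp]
lemma bordered_last_castSucc (j : Fin n) : bordered A v (last n) j.castSucc = -v j := by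
  simp [bordered]

@[simp]
lemma bordered_last_last : bordered A v (last n) (last n) = 0 := by
  simp [bordered]

lemma bordered_submatrix_castSucc {ι : Type*} (f : ι → Fin n) :
    (bordered A v).submatrix (castSucc ∘ f) (castSucc ∘ f) = A.submatrix f f := by
  ext; simp

lemma bordered_submatrix_sumElim {ι : Type*} (f : ι → Fin n) :
    (bordered A v).submatrix (Sum.elim (castSucc ∘ f) fun _ => last n)
      (Sum.elim (castSucc ∘ f) fun _ => last n) = borderBlocks (A.submatrix f f) (v ∘ f) := by
  ext (i | i) (j | j) <;> simp [borderBlocks]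

end Bordered

section Lift

open Fin

variable {n : ℕ} (I : Finset (Fin n))

lemma alph_of_even (h : Even I.card) :
    alph I = univ.image (castSucc ∘ ((↑) : I → Fin n)) := by
  ext x; simp [alph, h]

lemma alph_of_odd (h : Odd I.card) :
    alph I = univ.image (Sum.elim (castSucc ∘ ((↑) : I → Fin n)) fun _ : Unit => last n) := by
  ext x; simp [alph, Nat.not_even_iff_odd.mpr h, eq_comm (a := x), or_comm]

end Lift

/-- `det((A + v vᵀ)[I]) = det(A_v[α(I)])` for every `I ⊆ [n]`. -/
theorem stmt2 {n : ℕ} {K : Type*} [Field K]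
    (A : Matrix (Fin n) (Fin n) K) (v : Fin n → K)
    (hskew : Aᵀ = -A) (hdiag : ∀ i, A i i = 0)
    (I : Finset (Fin n)) :
    (psub (A + Matrix.vecMulVec v v) I).det = (psub (bordered A v) (alph I)).det := by
  set B := A.submatrix (Subtype.val : I → Fin n) Subtype.val
  have hBT : Bᵀ = -B := by rw [transpose_submatrix, hskew]; rfl
  have hBdiag : ∀ i, B i i = 0 := fun i => hdiag i
  have hsplit : (psub (A + vecMulVec v v) I).det = B.det + (borderBlocks B (v ∘ (↑))).det :=
    det_add_vecMulVec_self B _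
  have hinj : Function.Injective (Fin.castSucc ∘ ((↑) : I → Fin n)) :=
    (Fin.castSucc_injective n).comp Subtype.val_injective
  rcases Nat.even_or_odd I.card with h | h
  · have hodd : Odd (Fintype.card (I ⊕ Unit)) := by simpa [Nat.odd_add_one] using h
    rw [hsplit, det_eq_zero_of_transpose_eq_neg (transpose_borderBlocks hBT _)
      (borderBlocks_apply_self hBdiag _) hodd, add_zero, alph_of_even I h, det_psub_image _ hinj,
      bordered_submatrix_castSucc]
  · have hinj' := hinj.sumElim (Function.injective_of_subsingleton (fun _ : Unit => Fin.last n))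
      fun i _ => (Fin.castSucc_lt_last _).ne
    rw [hsplit, det_eq_zero_of_transpose_eq_neg hBT hBdiag (by simpa using h), zero_add,
      alph_of_odd I h, det_psub_image _ hinj', bordered_submatrix_sumElim]
end

section
/- A set system (E, 𝓑), where E is finite and 𝓑 is a nonempty collection of subsets of E, is a strong Δ-matroid if and only if its lift (E ∪ {ê}, α(𝓑)) is an even Δ-matroid, where α(𝓑) = {α(B) : B ∈ 𝓑} and α(I) = I for |I| even, α(I) = I ∪ {ê} for |I| odd. -/
set_option maxHeartbeats 1000000
open scoped symmDiff
namespace Stmt6Aux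
variable {α : Type*} [DecidableEq α]

/-- weak symmetric exchange -/
def Exch (F : Set (Finset α)) : Prop :=
  ∀ a ∈ F, ∀ a' ∈ F, ∀ x ∈ a ∆ a', ∃ y ∈ a ∆ a', a ∆ ({x, y} : Finset α) ∈ F

/-- all members have equal parity -/
def Par (F : Set (Finset α)) : Prop := ∀ a ∈ F, ∀ a' ∈ F, (Even a.card ↔ Even a'.card)

lemma parity_symmDiff (s t : Finset α) : Even (s ∆ t).card ↔ (Even s.card ↔ Even t.card) := by
  have h1 : s ∆ t = (s \ t) ∪ (t \ s) := by
    ext u; simp [Finset.mem_symmDiff]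
  have hd : Disjoint (s \ t) (t \ s) := by
    apply Finset.disjoint_left.2; intro u hu hv; simp at hu hv; tauto
  have h2 : (s ∆ t).card = (s \ t).card + (t \ s).card := by
    rw [h1, Finset.card_union_of_disjoint hd]
  have h3 := Finset.card_sdiff_add_card_inter s t
  have h4 := Finset.card_sdiff_add_card_inter t s
  have h5 : (s ∩ t).card = (t ∩ s).card := by rw [Finset.inter_comm]
  rw [Nat.even_iff, Nat.even_iff, Nat.even_iff]
  omega

lemma parity_pair (s : Finset α) {x y : α} (h : x ≠ y) :
    Even ((s ∆ ({x,y}:Finset α)).card) ↔ Even s.card := by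
  rw [parity_symmDiff, Finset.card_pair h]
  simp

lemma parity_single (s : Finset α) (x : α) :
    Even ((s ∆ ({x}:Finset α)).card) ↔ ¬ Even s.card := by
  rw [parity_symmDiff, Finset.card_singleton]
  simp [Nat.even_iff]

lemma exch_ne {F : Set (Finset α)} (hP : Par F) {s : Finset α} (hs : s ∈ F) {x y : α}
    (h : s ∆ ({x,y}:Finset α) ∈ F) : y ≠ x := by
  rintro rfl
  have h1 := hP s hs _ h
  have h2 : ({y,y}:Finset α) = {y} := by simp
  rw [h2, parity_single] at h1
  tauto

lemma pair_symmDiff {a b : α} (h : a ≠ b) : ({a}:Finset α) ∆ {b} = {a,b} := by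
  ext u; simp [Finset.mem_symmDiff]; aesop

lemma mem_symmDiff_pair {s : Finset α} {a x y : α} (hx : a ≠ x) (hy : a ≠ y) :
    a ∈ s ∆ ({x,y}:Finset α) ↔ a ∈ s := by
  simp [Finset.mem_symmDiff]; aesop

lemma symmDiff_sdiff_of_subset {s t : Finset α} (h : t ⊆ s) : s ∆ t = s \ t := by
  rw [symmDiff_comm, symmDiff_of_le h]

lemma card_quad_le (a b c d : α) : ({a,b,c,d}:Finset α).card ≤ 4 := by
  apply le_trans (Finset.card_insert_le _ _)
  have h3 : ({b,c,d}:Finset α).card ≤ 3 := by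
    apply le_trans (Finset.card_insert_le _ _)
    have h2 : ({c,d}:Finset α).card ≤ 2 := by
      apply le_trans (Finset.card_insert_le _ _); simp
    omega
  omega

lemma pair_subset {s : Finset α} {a b : α} (ha : a ∈ s) (hb : b ∈ s) :
    ({a,b}:Finset α) ⊆ s := by
  intro u hu; simp at hu; rcases hu with rfl | rfl <;> assumption

lemma quad_identity {x y w t : α} (hyx : y ≠ x) (hwx : w ≠ x) (hwy : w ≠ y)
    (hty : t ≠ y) (htw : t ≠ w) (htx : t ≠ x) :
    ({y,w}:Finset α) ∆ ({x,t}:Finset α) ∆ ({x,w}:Finset α) = ({y,t}:Finset α) := by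
  have h1 := hyx.symm; have h2 := hwx.symm; have h3 := hwy.symm
  have h4 := hty.symm; have h5 := htw.symm; have h6 := htx.symm
  ext u; simp [Finset.mem_symmDiff]; aesop

/-- Strong exchange property for even Δ-matroid-like families. -/
lemma even_strong : ∀ n : ℕ, ∀ F : Set (Finset α), Exch F → Par F →
    ∀ b ∈ F, ∀ b' ∈ F, ∀ x ∈ b ∆ b', (b ∆ b').card ≤ n →
    ∃ y ∈ b ∆ b', y ≠ x ∧ b ∆ ({x,y}:Finset α) ∈ F ∧ b' ∆ ({x,y}:Finset α) ∈ F := by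
  intro n
  induction n using Nat.strong_induction_on with
  | _ n IH =>
  intro F hE hP b hb b' hb' x hx hn
  classical
  have hEvenD : Even ((b ∆ b').card) := (parity_symmDiff b b').2 (hP b hb b' hb')
  have hpos : 0 < (b ∆ b').card := Finset.card_pos.2 ⟨x, hx⟩
  have hcases : (b ∆ b').card = 2 ∨ (b ∆ b').card = 4 ∨ 6 ≤ (b ∆ b').card := by
    rcases hEvenD with ⟨k, hk⟩; omega
  rcases hcases with h2 | h4 | h6
  · -- distance 2
    obtain ⟨y, hyD, hy⟩ := hE b hb b' hb' x hx
    have hyx : y ≠ x := exch_ne hP hb hy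
    have hsub : ({x,y}:Finset α) ⊆ b ∆ b' := pair_subset hx hyD
    have hDxy : ({x,y}:Finset α) = b ∆ b' :=
      Finset.eq_of_subset_of_card_le hsub (by rw [Finset.card_pair (Ne.symm hyx)]; omega)
    have hb'xy : b' ∆ ({x,y}:Finset α) = b := by
      rw [hDxy, symmDiff_comm b b', symmDiff_symmDiff_cancel_left]
    exact ⟨y, hyD, hyx, hy, hb'xy ▸ hb⟩
  · -- distance 4
    by_contra hconEx
    have hcon : ∀ z ∈ b ∆ b', z ≠ x → b ∆ ({x,z}:Finset α) ∈ F →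
        b' ∆ ({x,z}:Finset α) ∈ F → False := by
      intro z hz hzx hz1 hz2
      exact hconEx ⟨z, hz, hzx, hz1, hz2⟩
    have key : ∀ c c' : Finset α, c ∈ F → c' ∈ F → c ∆ c' = b ∆ b' →
        ∀ i ∈ (b ∆ b').erase x,
        (c ∆ ({x,i}:Finset α) ∈ F) ∨ ∃ k ∈ (b ∆ b').erase x, k ≠ i ∧ c' ∆ ({x,k}:Finset α) ∈ F := by
      intro c c' hc hc' hcc' i hi
      rw [Finset.mem_erase] at hi
      obtain ⟨hix, hiD⟩ := hi
      have hiD' : i ∈ c ∆ c' := by rw [hcc']; exact hiD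
      obtain ⟨u, huD, hu⟩ := hE c hc c' hc' i hiD'
      rw [hcc'] at huD
      have hui : u ≠ i := exch_ne hP hc hu
      by_cases hux : u = x
      · subst hux
        left
        rwa [Finset.pair_comm] at hu
      · right
        have hpsub : ({i,u}:Finset α) ⊆ b ∆ b' := pair_subset hiD huD
        have htcard : ((b ∆ b') \ ({i,u}:Finset α)).card = 2 := by
          rw [Finset.card_sdiff_of_subset hpsub, Finset.card_pair (Ne.symm hui)]; omega
        have hxt : x ∈ (b ∆ b') \ ({i,u}:Finset α) := by
          rw [Finset.mem_sdiff]
          refine ⟨hx, ?_⟩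
          simp only [Finset.mem_insert, Finset.mem_singleton]
          push_neg
          exact ⟨Ne.symm hix, fun h => hux h.symm⟩
        have hec : (((b ∆ b') \ ({i,u}:Finset α)).erase x).card = 1 := by
          rw [Finset.card_erase_of_mem hxt, htcard]
        obtain ⟨k, hk⟩ := Finset.card_eq_one.1 hec
        have hkmem : k ∈ ((b ∆ b') \ ({i,u}:Finset α)).erase x := by
          rw [hk]; exact Finset.mem_singleton_self k
        have hkx : k ≠ x := (Finset.mem_erase.1 hkmem).1
        have hkt : k ∈ (b ∆ b') \ ({i,u}:Finset α) := Finset.mem_of_mem_erase hkmem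
        have hkD : k ∈ b ∆ b' := (Finset.mem_sdiff.1 hkt).1
        have hki : k ≠ i := by
          have h' := (Finset.mem_sdiff.1 hkt).2
          simp only [Finset.mem_insert, Finset.mem_singleton] at h'
          push_neg at h'
          exact h'.1
        have htxk : (b ∆ b') \ ({i,u}:Finset α) = ({x,k}:Finset α) := by
          rw [← Finset.insert_erase hxt, hk]
        have hxksub : ({x,k}:Finset α) ⊆ b ∆ b' := by
          rw [← htxk]; exact Finset.sdiff_subset
        have hDxk : (b ∆ b') ∆ ({x,k}:Finset α) = ({i,u}:Finset α) := by
          rw [symmDiff_sdiff_of_subset hxksub, ← htxk,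
            Finset.sdiff_sdiff_self_left, Finset.inter_eq_right.2 hpsub]
        have hcd : c ∆ ({i,u}:Finset α) = c' ∆ ({x,k}:Finset α) := by
          calc c ∆ ({i,u}:Finset α) = c ∆ ((b ∆ b') ∆ ({x,k}:Finset α)) := by rw [hDxk]
            _ = (c ∆ (b ∆ b')) ∆ ({x,k}:Finset α) := (symmDiff_assoc c (b ∆ b') _).symm
            _ = c' ∆ ({x,k}:Finset α) := by rw [← hcc', symmDiff_symmDiff_cancel_left]
        exact ⟨k, Finset.mem_erase.2 ⟨hkx, hkD⟩, hki, hcd ▸ hu⟩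
    set S : Finset α := (b ∆ b').filter (fun i => b ∆ ({x,i}:Finset α) ∈ F) with hSdef
    set T : Finset α := (b ∆ b').filter (fun i => b' ∆ ({x,i}:Finset α) ∈ F) with hTdef
    have hxS : x ∉ S := by
      rw [hSdef, Finset.mem_filter]
      rintro ⟨-, hmem⟩
      exact (exch_ne hP hb hmem) rfl
    have hxT : x ∉ T := by
      rw [hTdef, Finset.mem_filter]
      rintro ⟨-, hmem⟩
      exact (exch_ne hP hb' hmem) rfl
    have hSsub : S ⊆ (b ∆ b').erase x :=
      Finset.subset_erase.2 ⟨Finset.filter_subset _ _, hxS⟩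
    have hTsub : T ⊆ (b ∆ b').erase x :=
      Finset.subset_erase.2 ⟨Finset.filter_subset _ _, hxT⟩
    have hSne : S.Nonempty := by
      obtain ⟨y, hyD, hy⟩ := hE b hb b' hb' x hx
      refine ⟨y, ?_⟩
      rw [hSdef, Finset.mem_filter]
      exact ⟨hyD, hy⟩
    have hTne : T.Nonempty := by
      obtain ⟨y, hyD, hy⟩ := hE b' hb' b hb x (by rwa [symmDiff_comm])
      rw [symmDiff_comm] at hyD
      refine ⟨y, ?_⟩
      rw [hTdef, Finset.mem_filter]
      exact ⟨hyD, hy⟩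
    have hdisj : Disjoint S T := by
      rw [Finset.disjoint_left]
      intro u huS huT
      have hux : u ≠ x := fun h => hxS (h ▸ huS)
      rw [hSdef, Finset.mem_filter] at huS
      rw [hTdef, Finset.mem_filter] at huT
      exact hcon u huS.1 hux huS.2 huT.2
    obtain ⟨s₀, hs₀⟩ := hSne
    obtain ⟨t₀, ht₀⟩ := hTne
    have hs₀T : s₀ ∉ T := Finset.disjoint_left.1 hdisj hs₀
    have ht₀S : t₀ ∉ S := Finset.disjoint_right.1 hdisj ht₀
    have hScard : 2 ≤ S.card := by
      rcases key b' b hb' hb (symmDiff_comm b' b) s₀ (hSsub hs₀) with h | ⟨k, hk, hks, hkS⟩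
      · exfalso
        apply hs₀T
        rw [hTdef, Finset.mem_filter]
        exact ⟨(Finset.mem_erase.1 (hSsub hs₀)).2, h⟩
      · have hkS' : k ∈ S := by
          rw [hSdef, Finset.mem_filter]
          exact ⟨(Finset.mem_erase.1 hk).2, hkS⟩
        exact Finset.one_lt_card.2 ⟨s₀, hs₀, k, hkS', fun h => hks (h ▸ rfl)⟩
    have hTcard : 2 ≤ T.card := by
      rcases key b b' hb hb' rfl t₀ (hTsub ht₀) with h | ⟨k, hk, hkt, hkT⟩
      · exfalso
        apply ht₀S
        rw [hSdef, Finset.mem_filter]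
        exact ⟨(Finset.mem_erase.1 (hTsub ht₀)).2, h⟩
      · have hkT' : k ∈ T := by
          rw [hTdef, Finset.mem_filter]
          exact ⟨(Finset.mem_erase.1 hk).2, hkT⟩
        exact Finset.one_lt_card.2 ⟨t₀, ht₀, k, hkT', fun h => hkt (h ▸ rfl)⟩
    have hunion : S ∪ T ⊆ (b ∆ b').erase x := Finset.union_subset hSsub hTsub
    have hcard3 : ((b ∆ b').erase x).card = 3 := by
      rw [Finset.card_erase_of_mem hx, h4]
    have hle := Finset.card_le_card hunion
    rw [Finset.card_union_of_disjoint hdisj, hcard3] at hle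
    omega
  · -- distance ≥ 6
    by_contra hconEx
    have hcon : ∀ z ∈ b ∆ b', z ≠ x → b ∆ ({x,z}:Finset α) ∈ F →
        b' ∆ ({x,z}:Finset α) ∈ F → False := by
      intro z hz hzx hz1 hz2
      exact hconEx ⟨z, hz, hzx, hz1, hz2⟩
    have hn6 : 6 ≤ n := le_trans h6 hn
    have STEP : ∀ y w : α, y ∈ b ∆ b' → y ≠ x → b ∆ ({x,y}:Finset α) ∈ F →
        w ∈ b ∆ b' → w ≠ x → w ≠ y → b' ∆ ({y,w}:Finset α) ∈ F →
        ∃ t, t ∈ b ∆ b' ∧ t ≠ x ∧ t ≠ y ∧ t ≠ w ∧ b ∆ ({x,t}:Finset α) ∈ F ∧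
          b' ∆ ({y,t}:Finset α) ∈ F ∧ b' ∆ ({x,w}:Finset α) ∈ F := by
      intro y w hyD hyx hy hwD hwx hwy hw
      set G : Set (Finset α) := {A | A ∈ F ∧ (y ∈ A ↔ y ∈ b) ∧ (w ∈ A ↔ w ∈ b)} with hGdef
      have hGE : Exch G := by
        rintro A ⟨hA, hAy, hAw⟩ A' ⟨hA', hA'y, hA'w⟩ u hu
        have hyAA : y ∉ A ∆ A' := by
          simp only [Finset.mem_symmDiff]
          tauto
        have hwAA : w ∉ A ∆ A' := by
          simp only [Finset.mem_symmDiff]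
          tauto
        obtain ⟨v, hv, hm⟩ := hE A hA A' hA' u hu
        refine ⟨v, hv, hm, ?_, ?_⟩
        · have hyu : y ≠ u := fun h => hyAA (by rw [h]; exact hu)
          have hyv : y ≠ v := fun h => hyAA (by rw [h]; exact hv)
          rw [mem_symmDiff_pair hyu hyv]
          exact hAy
        · have hwu : w ≠ u := fun h => hwAA (by rw [h]; exact hu)
          have hwv : w ≠ v := fun h => hwAA (by rw [h]; exact hv)
          rw [mem_symmDiff_pair hwu hwv]
          exact hAw
      have hGP : Par G := fun a ha a' ha' => hP a ha.1 a' ha'.1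
      have hbG : b ∈ G := ⟨hb, Iff.rfl, Iff.rfl⟩
      have hyb : (y ∈ b ↔ y ∉ b') := by
        have h' := hyD; simp only [Finset.mem_symmDiff] at h'; tauto
      have hwb : (w ∈ b ↔ w ∉ b') := by
        have h' := hwD; simp only [Finset.mem_symmDiff] at h'; tauto
      have hb''G : b' ∆ ({y,w}:Finset α) ∈ G := by
        refine ⟨hw, ?_, ?_⟩
        · simp only [Finset.mem_symmDiff, Finset.mem_insert, Finset.mem_singleton]
          tauto
        · simp only [Finset.mem_symmDiff, Finset.mem_insert, Finset.mem_singleton]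
          have : ¬ (w = y) := hwy
          tauto
      have hywsub : ({y,w}:Finset α) ⊆ b ∆ b' := pair_subset hyD hwD
      have hD'' : b ∆ (b' ∆ ({y,w}:Finset α)) = (b ∆ b') \ {y,w} := by
        rw [← symmDiff_assoc, symmDiff_sdiff_of_subset hywsub]
      have hx'' : x ∈ b ∆ (b' ∆ ({y,w}:Finset α)) := by
        rw [hD'', Finset.mem_sdiff]
        refine ⟨hx, ?_⟩
        simp only [Finset.mem_insert, Finset.mem_singleton]
        push_neg
        exact ⟨Ne.symm hyx, Ne.symm hwx⟩
      have hcard'' : (b ∆ (b' ∆ ({y,w}:Finset α))).card ≤ n - 2 := by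
        rw [hD'', Finset.card_sdiff_of_subset hywsub, Finset.card_pair (Ne.symm hwy)]
        omega
      obtain ⟨t, htD'', htx, ht1, ht2⟩ :=
        IH (n-2) (by omega) G hGE hGP b hbG _ hb''G x hx'' hcard''
      rw [hD'', Finset.mem_sdiff] at htD''
      obtain ⟨htD, htyw⟩ := htD''
      simp only [Finset.mem_insert, Finset.mem_singleton] at htyw
      push_neg at htyw
      obtain ⟨hty, htw⟩ := htyw
      have hbt : b ∆ ({x,t}:Finset α) ∈ F := ht1.1
      have hcF : (b' ∆ ({y,w}:Finset α)) ∆ ({x,t}:Finset α) ∈ F := ht2.1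
      have hc_eq : (b' ∆ ({y,w}:Finset α)) ∆ ({x,t}:Finset α)
          = b' ∆ (({y,w}:Finset α) ∆ ({x,t}:Finset α)) := symmDiff_assoc _ _ _
      have hbc : b' ∆ ((b' ∆ ({y,w}:Finset α)) ∆ ({x,t}:Finset α))
          = ({y,w}:Finset α) ∆ ({x,t}:Finset α) := by
        rw [hc_eq, symmDiff_symmDiff_cancel_left]
      have hx4 : x ∈ b' ∆ ((b' ∆ ({y,w}:Finset α)) ∆ ({x,t}:Finset α)) := by
        rw [hbc]
        simp only [Finset.mem_symmDiff, Finset.mem_insert, Finset.mem_singleton]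
        have h1 : ¬ (x = y) := Ne.symm hyx
        have h2 : ¬ (x = w) := Ne.symm hwx
        tauto
      have hsub4 : b' ∆ ((b' ∆ ({y,w}:Finset α)) ∆ ({x,t}:Finset α)) ⊆ ({x,y,w,t}:Finset α) := by
        rw [hbc]
        intro u hu
        simp only [Finset.mem_symmDiff, Finset.mem_insert, Finset.mem_singleton] at hu
        simp only [Finset.mem_insert, Finset.mem_singleton]
        tauto
      have hcard4 : (b' ∆ ((b' ∆ ({y,w}:Finset α)) ∆ ({x,t}:Finset α))).card ≤ 4 :=
        le_trans (Finset.card_le_card hsub4) (card_quad_le x y w t)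
      obtain ⟨r, hr4, hrx, hr1, hr2⟩ :=
        IH 4 (by omega) F hE hP b' hb' _ hcF x hx4 hcard4
      have hrmem : r = y ∨ r = w ∨ r = t := by
        have h' := hsub4 hr4
        simp only [Finset.mem_insert, Finset.mem_singleton] at h'
        tauto
      rcases hrmem with hr | hr | hr
      · rw [hr] at hr1
        exact (hcon y hyD hyx hy hr1).elim
      · rw [hr] at hr1 hr2
        refine ⟨t, htD, htx, hty, htw, hbt, ?_, hr1⟩
        have hq : ({y,w}:Finset α) ∆ ({x,t}:Finset α) ∆ ({x,w}:Finset α) = ({y,t}:Finset α) :=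
          quad_identity hyx hwx hwy hty htw htx
        have hcw : (b' ∆ ({y,w}:Finset α)) ∆ ({x,t}:Finset α) ∆ ({x,w}:Finset α)
            = b' ∆ ({y,t}:Finset α) := by
          rw [hc_eq, symmDiff_assoc, hq]
        rwa [hcw] at hr2
      · rw [hr] at hr1
        exact (hcon t htD htx hbt hr1).elim
    obtain ⟨y, hyD, hy⟩ := hE b hb b' hb' x hx
    have hyx : y ≠ x := exch_ne hP hb hy
    obtain ⟨w, hwD', hw⟩ := hE b' hb' b hb y (by rwa [symmDiff_comm])
    have hwy : w ≠ y := exch_ne hP hb' hw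
    have hwD : w ∈ b ∆ b' := by rwa [symmDiff_comm] at hwD'
    have hwx : w ≠ x := by
      rintro rfl
      exact hcon y hyD hyx hy (by rwa [Finset.pair_comm] at hw)
    obtain ⟨t, htD, htx, hty, htw, hbt, hb't, -⟩ := STEP y w hyD hyx hy hwD hwx hwy hw
    obtain ⟨-, -, -, -, -, -, -, hfin⟩ := STEP y t hyD hyx hy htD htx hty hb't
    exact hcon t htD htx hbt hfin


lemma not_mem_symmDiff {s t : Finset α} {a : α} (h1 : a ∉ s) (h2 : a ∉ t) : a ∉ s ∆ t := by
  simp [Finset.mem_symmDiff]; tauto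

lemma mem_symmDiff_single {s : Finset α} {x z : α} (hx : x ∈ s)
    (h : z ∈ s ∆ ({x}:Finset α)) : z ∈ s ∧ z ≠ x := by
  simp [Finset.mem_symmDiff] at h; aesop

lemma symmDiff_single_right_comm (s t : Finset α) (x : α) :
    (s ∆ ({x}:Finset α)) ∆ t = (s ∆ t) ∆ ({x}:Finset α) := by
  rw [symmDiff_assoc, symmDiff_comm ({x}:Finset α) t, ← symmDiff_assoc]

lemma insert_insert_symmDiff {s t : Finset α} {a : α} (ha : a ∉ s) (hb : a ∉ t) :
    (insert a s) ∆ (insert a t) = s ∆ t := by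
  ext u; simp [Finset.mem_symmDiff]; aesop

lemma symmDiff_insert_right {s t : Finset α} {a : α} (ha : a ∉ s) (ht : a ∉ t) :
    s ∆ (insert a t) = insert a (s ∆ t) := by
  ext u; simp [Finset.mem_symmDiff]; aesop

lemma insert_symmDiff_left {s p : Finset α} {a : α} (ha : a ∉ s) (hp : a ∉ p) :
    (insert a s) ∆ p = insert a (s ∆ p) := by
  ext u; simp [Finset.mem_symmDiff]; aesop

lemma symmDiff_pair_insert {s : Finset α} {a z : α} (ha : a ∉ s) (hz : z ≠ a) :
    s ∆ ({a,z}:Finset α) = insert a (s ∆ ({z}:Finset α)) := by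
  ext u; simp [Finset.mem_symmDiff]; aesop

lemma insert_symmDiff_pair {s : Finset α} {a z : α} (ha : a ∉ s) (hz : z ≠ a) :
    (insert a s) ∆ ({a,z}:Finset α) = s ∆ ({z}:Finset α) := by
  ext u; simp [Finset.mem_symmDiff]; aesop

lemma pair_self {a : α} : ({a,a}:Finset α) = {a} := by simp


lemma symmDiff_sdiff_of_subset' {s t : Finset α} (h : t ⊆ s) : s ∆ t = s \ t := by
  rw [symmDiff_comm, symmDiff_of_le h]

lemma pair_subset' {s : Finset α} {a b : α} (ha : a ∈ s) (hb : b ∈ s) :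
    ({a,b}:Finset α) ⊆ s := by
  intro u hu; simp at hu; rcases hu with rfl | rfl <;> assumption

/-- If two members of a strongly exchangeable family have odd symmetric difference,
then some single element of the difference can be flipped in the first one. -/
lemma single_flip : ∀ n : ℕ, ∀ F : Set (Finset α),
    (∀ b ∈ F, ∀ b' ∈ F, ∀ x ∈ b ∆ b', ∃ y ∈ b ∆ b',
      b ∆ ({x,y}:Finset α) ∈ F ∧ b' ∆ ({x,y}:Finset α) ∈ F) →
    ∀ b ∈ F, ∀ b' ∈ F, ¬ Even ((b ∆ b').card) → (b ∆ b').card ≤ n →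
    ∃ z ∈ b ∆ b', b ∆ ({z}:Finset α) ∈ F := by
  intro n
  induction n using Nat.strong_induction_on with
  | _ n IH =>
  intro F hS b hb b' hb' hodd hn
  have hne : (b ∆ b').Nonempty := by
    rcases Finset.eq_empty_or_nonempty (b ∆ b') with h | h
    · exfalso; apply hodd; rw [h]; simp
    · exact h
  obtain ⟨x, hx⟩ := hne
  obtain ⟨y, hyD, h1, h2⟩ := hS b hb b' hb' x hx
  by_cases hxy : y = x
  · subst hxy
    refine ⟨y, hyD, ?_⟩
    have hp : ({y,y}:Finset α) = {y} := by simp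
    rwa [hp] at h1
  · have hsub : ({x,y}:Finset α) ⊆ b ∆ b' := pair_subset' hx hyD
    have hxyne : x ≠ y := fun h => hxy h.symm
    have hcard2 : 2 ≤ (b ∆ b').card := by
      have h' := Finset.card_le_card hsub
      rwa [Finset.card_pair hxyne] at h'
    have hD : b ∆ (b' ∆ ({x,y}:Finset α)) = (b ∆ b') \ {x,y} := by
      rw [← symmDiff_assoc, symmDiff_sdiff_of_subset' hsub]
    have hcard' : (b ∆ (b' ∆ ({x,y}:Finset α))).card = (b ∆ b').card - 2 := by
      rw [hD, Finset.card_sdiff_of_subset hsub, Finset.card_pair hxyne]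
    have hodd' : ¬ Even ((b ∆ (b' ∆ ({x,y}:Finset α))).card) := by
      rw [hcard']
      rw [Nat.even_iff] at hodd ⊢
      omega
    have hnpos : 1 ≤ n := le_trans (le_trans (by omega) hcard2) hn
    obtain ⟨z, hzD, hz⟩ := IH (n-1) (by omega) F hS b hb _ h2 hodd' (by omega)
    refine ⟨z, ?_, hz⟩
    rw [hD] at hzD
    exact (Finset.mem_sdiff.1 hzD).1


end Stmt6Aux

open scoped symmDiff
/-- `(E, 𝓑)` is a Δ-matroid: `𝓑` is a nonempty collection of subsets of `E`
satisfying the symmetric exchange axiom. -/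
def IsDeltaMatroid {α : Type*} [DecidableEq α] (E : Finset α) (B : Set (Finset α)) : Prop :=
  B.Nonempty ∧ (∀ b ∈ B, b ⊆ E) ∧
    ∀ b ∈ B, ∀ b' ∈ B, ∀ x ∈ b ∆ b', ∃ y ∈ b ∆ b', b ∆ ({x, y} : Finset α) ∈ B

/-- `(E, 𝓑)` is a strong Δ-matroid: it additionally satisfies the strong basis
exchange property. -/
def IsStrongDeltaMatroid {α : Type*} [DecidableEq α] (E : Finset α) (B : Set (Finset α)) : Prop :=
  IsDeltaMatroid E B ∧
    ∀ b ∈ B, ∀ b' ∈ B, ∀ x ∈ b ∆ b', ∃ y ∈ b ∆ b',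
      b ∆ ({x, y} : Finset α) ∈ B ∧ b' ∆ ({x, y} : Finset α) ∈ B

/-- `(E, 𝓑)` is an even Δ-matroid: a Δ-matroid all of whose bases have the same parity. -/
def IsEvenDeltaMatroid {α : Type*} [DecidableEq α] (E : Finset α) (B : Set (Finset α)) : Prop :=
  IsDeltaMatroid E B ∧ ∀ b ∈ B, ∀ b' ∈ B, (Even b.card ↔ Even b'.card)

/-- a set system `(E, 𝓑)` is a strong Δ-matroid iff its lift
`(E ∪ {e₀}, α(𝓑))` is an even Δ-matroid. -/
theorem stmt6 {α : Type*} [DecidableEq α] (E : Finset α) (e₀ : α) (he : e₀ ∉ E)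
    (B : Set (Finset α)) (hne : B.Nonempty) (hsub : ∀ b ∈ B, b ⊆ E) :
    IsStrongDeltaMatroid E B ↔
      IsEvenDeltaMatroid (insert e₀ E)
        ((fun I : Finset α => if Even I.card then I else insert e₀ I) '' B) := by
  classical
  have he₀b : ∀ b ∈ B, e₀ ∉ b := fun b hb h => he (hsub b hb h)
  have hDE : ∀ {b b' : Finset α}, b ∈ B → b' ∈ B → b ∆ b' ⊆ E := by
    intro b b' hb hb' u hu
    rcases Finset.mem_symmDiff.1 hu with ⟨h, -⟩ | ⟨h, -⟩
    exacts [hsub b hb h, hsub b' hb' h]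
  have hmkE : ∀ s, s ∈ B → Even s.card →
      s ∈ ((fun I : Finset α => if Even I.card then I else insert e₀ I) '' B) :=
    fun s hs hp => ⟨s, hs, by simp [hp]⟩
  have hmkO : ∀ s, s ∈ B → ¬ Even s.card →
      insert e₀ s ∈ ((fun I : Finset α => if Even I.card then I else insert e₀ I) '' B) :=
    fun s hs hp => ⟨s, hs, by simp [hp]⟩
  have hM1 : ∀ C ∈ ((fun I : Finset α => if Even I.card then I else insert e₀ I) '' B),
      e₀ ∉ C → C ∈ B := by
    rintro C ⟨s, hs, rfl⟩ hC
    by_cases hp : Even s.card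
    · simpa [hp] using hs
    · exfalso; apply hC; simp [hp]
  have hM2 : ∀ C ∈ ((fun I : Finset α => if Even I.card then I else insert e₀ I) '' B),
      e₀ ∈ C → C.erase e₀ ∈ B := by
    rintro C ⟨s, hs, rfl⟩ hC
    by_cases hp : Even s.card
    · exfalso
      simp only [hp, if_true] at hC
      exact he₀b s hs hC
    · simp only [hp, if_false]
      rw [Finset.erase_insert (he₀b s hs)]
      exact hs
  constructor
  · -- forward direction
    rintro ⟨⟨-, -, -⟩, hstrong⟩
    have hallE : ∀ C ∈ ((fun I : Finset α => if Even I.card then I else insert e₀ I) '' B),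
        Even C.card := by
      rintro C ⟨s, hs, rfl⟩
      by_cases hp : Even s.card
      · simp [hp]
      · simp only [hp, if_false]
        rw [Finset.card_insert_of_notMem (he₀b s hs)]
        rw [Nat.even_iff] at hp ⊢
        omega
    refine ⟨⟨?_, ?_, ?_⟩, fun C hC C' hC' => iff_of_true (hallE C hC) (hallE C' hC')⟩
    · obtain ⟨b, hb⟩ := hne
      exact ⟨_, b, hb, rfl⟩
    · rintro C ⟨s, hs, rfl⟩
      by_cases hp : Even s.card
      · simp only [hp, if_true]
        exact subset_trans (hsub s hs) (Finset.subset_insert _ _)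
      · simp only [hp, if_false]
        exact Finset.insert_subset_insert _ (hsub s hs)
    · -- exchange in the lift
      rintro C ⟨b, hb, rfl⟩ C' ⟨b', hb', rfl⟩ z hz
      have hE0 : e₀ ∉ b := he₀b b hb
      have hE0' : e₀ ∉ b' := he₀b b' hb'
      by_cases hbe : Even b.card <;> by_cases hb'e : Even b'.card
      · -- even, even
        simp only [hbe, hb'e, if_true] at hz ⊢
        obtain ⟨y, hyD, hy1, hy2⟩ := hstrong b hb b' hb' z hz
        by_cases hyz : y = z
        · rw [hyz, Stmt6Aux.pair_self] at hy1
          have hDeven : Even ((b ∆ b').card) :=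
            (Stmt6Aux.parity_symmDiff b b').2 (iff_of_true hbe hb'e)
          have heq : (b ∆ ({z}:Finset α)) ∆ b' = (b ∆ b') ∆ ({z}:Finset α) :=
            Stmt6Aux.symmDiff_single_right_comm b b' z
          have hodd : ¬ Even (((b ∆ ({z}:Finset α)) ∆ b').card) := by
            rw [heq, Stmt6Aux.parity_single]
            exact not_not_intro hDeven
          obtain ⟨w, hwD, hw⟩ := Stmt6Aux.single_flip _ B hstrong _ hy1 b' hb' hodd le_rfl
          rw [heq] at hwD
          obtain ⟨hwD', hwz⟩ := Stmt6Aux.mem_symmDiff_single hz hwD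
          have hconv : (b ∆ ({z}:Finset α)) ∆ ({w}:Finset α) = b ∆ ({z,w}:Finset α) := by
            rw [symmDiff_assoc, Stmt6Aux.pair_symmDiff (Ne.symm hwz)]
          rw [hconv] at hw
          exact ⟨w, hwD', hmkE _ hw ((Stmt6Aux.parity_pair b (Ne.symm hwz)).2 hbe)⟩
        · exact ⟨y, hyD, hmkE _ hy1 ((Stmt6Aux.parity_pair b (fun h => hyz h.symm)).2 hbe)⟩
      · -- even, odd
        simp only [hbe, hb'e, if_true, if_false] at hz ⊢
        have hdiff : b ∆ (insert e₀ b') = insert e₀ (b ∆ b') :=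
          Stmt6Aux.symmDiff_insert_right hE0 hE0'
        rw [hdiff] at hz ⊢
        have hODD : ¬ Even ((b ∆ b').card) := by
          rw [Stmt6Aux.parity_symmDiff]; tauto
        by_cases hze : z = e₀
        · subst hze
          obtain ⟨w, hwD, hw⟩ := Stmt6Aux.single_flip _ B hstrong b hb b' hb' hODD le_rfl
          have hwe : w ≠ z := fun h => he (hDE hb hb' (h ▸ hwD))
          have hconv : b ∆ ({z,w}:Finset α) = insert z (b ∆ ({w}:Finset α)) :=
            Stmt6Aux.symmDiff_pair_insert hE0 hwe
          have hoddw : ¬ Even ((b ∆ ({w}:Finset α)).card) := by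
            rw [Stmt6Aux.parity_single]
            exact not_not_intro hbe
          refine ⟨w, Finset.mem_insert_of_mem hwD, ?_⟩
          rw [hconv]
          exact hmkO _ hw hoddw
        · have hzD : z ∈ b ∆ b' := Finset.mem_of_mem_insert_of_ne hz hze
          obtain ⟨y, hyD, hy1, hy2⟩ := hstrong b hb b' hb' z hzD
          by_cases hyz : y = z
          · rw [hyz, Stmt6Aux.pair_self] at hy1
            have hconv : b ∆ ({z,e₀}:Finset α) = insert e₀ (b ∆ ({z}:Finset α)) := by
              rw [Finset.pair_comm]
              exact Stmt6Aux.symmDiff_pair_insert hE0 hze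
            have hoddz : ¬ Even ((b ∆ ({z}:Finset α)).card) := by
              rw [Stmt6Aux.parity_single]
              exact not_not_intro hbe
            refine ⟨e₀, Finset.mem_insert_self _ _, ?_⟩
            rw [hconv]
            exact hmkO _ hy1 hoddz
          · exact ⟨y, Finset.mem_insert_of_mem hyD,
              hmkE _ hy1 ((Stmt6Aux.parity_pair b (fun h => hyz h.symm)).2 hbe)⟩
      · -- odd, even
        simp only [hbe, hb'e, if_true, if_false] at hz ⊢
        have hdiff : (insert e₀ b) ∆ b' = insert e₀ (b ∆ b') :=
          Stmt6Aux.insert_symmDiff_left hE0 hE0'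
        rw [hdiff] at hz ⊢
        have hODD : ¬ Even ((b ∆ b').card) := by
          rw [Stmt6Aux.parity_symmDiff]; tauto
        by_cases hze : z = e₀
        · subst hze
          obtain ⟨w, hwD, hw⟩ := Stmt6Aux.single_flip _ B hstrong b hb b' hb' hODD le_rfl
          have hwe : w ≠ z := fun h => he (hDE hb hb' (h ▸ hwD))
          have hconv : (insert z b) ∆ ({z,w}:Finset α) = b ∆ ({w}:Finset α) :=
            Stmt6Aux.insert_symmDiff_pair hE0 hwe
          have hevw : Even ((b ∆ ({w}:Finset α)).card) := by
            rw [Stmt6Aux.parity_single]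
            exact hbe
          refine ⟨w, Finset.mem_insert_of_mem hwD, ?_⟩
          rw [hconv]
          exact hmkE _ hw hevw
        · have hzD : z ∈ b ∆ b' := Finset.mem_of_mem_insert_of_ne hz hze
          obtain ⟨y, hyD, hy1, hy2⟩ := hstrong b hb b' hb' z hzD
          by_cases hyz : y = z
          · rw [hyz, Stmt6Aux.pair_self] at hy1
            have hconv : (insert e₀ b) ∆ ({z,e₀}:Finset α) = b ∆ ({z}:Finset α) := by
              rw [Finset.pair_comm]
              exact Stmt6Aux.insert_symmDiff_pair hE0 hze
            have hevz : Even ((b ∆ ({z}:Finset α)).card) := by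
              rw [Stmt6Aux.parity_single]
              exact hbe
            refine ⟨e₀, Finset.mem_insert_self _ _, ?_⟩
            rw [hconv]
            exact hmkE _ hy1 hevz
          · have hye : y ≠ e₀ := fun h => he (hDE hb hb' (h ▸ hyD))
            have hpe : e₀ ∉ ({z,y}:Finset α) := by
              simp only [Finset.mem_insert, Finset.mem_singleton]
              push_neg
              exact ⟨Ne.symm hze, Ne.symm hye⟩
            have hconv : (insert e₀ b) ∆ ({z,y}:Finset α) = insert e₀ (b ∆ ({z,y}:Finset α)) :=
              Stmt6Aux.insert_symmDiff_left hE0 hpe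
            have hoddp : ¬ Even ((b ∆ ({z,y}:Finset α)).card) := by
              rw [Stmt6Aux.parity_pair b (fun h => hyz h.symm)]
              exact hbe
            refine ⟨y, Finset.mem_insert_of_mem hyD, ?_⟩
            rw [hconv]
            exact hmkO _ hy1 hoddp
      · -- odd, odd
        simp only [hbe, hb'e, if_false] at hz ⊢
        have hdiff : (insert e₀ b) ∆ (insert e₀ b') = b ∆ b' :=
          Stmt6Aux.insert_insert_symmDiff hE0 hE0'
        rw [hdiff] at hz ⊢
        have hze : z ≠ e₀ := fun h => he (hDE hb hb' (h ▸ hz))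
        obtain ⟨y, hyD, hy1, hy2⟩ := hstrong b hb b' hb' z hz
        have hfin : ∀ w, w ∈ b ∆ b' → w ≠ z → b ∆ ({z,w}:Finset α) ∈ B →
            ∃ y' ∈ b ∆ b', (insert e₀ b) ∆ ({z,y'}:Finset α) ∈
              ((fun I : Finset α => if Even I.card then I else insert e₀ I) '' B) := by
          intro w hwD hwz hwm
          have hwe : w ≠ e₀ := fun h => he (hDE hb hb' (h ▸ hwD))
          have hpe : e₀ ∉ ({z,w}:Finset α) := by
            simp only [Finset.mem_insert, Finset.mem_singleton]
            push_neg
            exact ⟨Ne.symm hze, Ne.symm hwe⟩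
          have hconv : (insert e₀ b) ∆ ({z,w}:Finset α) = insert e₀ (b ∆ ({z,w}:Finset α)) :=
            Stmt6Aux.insert_symmDiff_left hE0 hpe
          have hoddp : ¬ Even ((b ∆ ({z,w}:Finset α)).card) := by
            rw [Stmt6Aux.parity_pair b (Ne.symm hwz)]
            exact hbe
          refine ⟨w, hwD, ?_⟩
          rw [hconv]
          exact hmkO _ hwm hoddp
        by_cases hyz : y = z
        · rw [hyz, Stmt6Aux.pair_self] at hy1
          have hDeven : Even ((b ∆ b').card) :=
            (Stmt6Aux.parity_symmDiff b b').2 (iff_of_false hbe hb'e)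
          have heq : (b ∆ ({z}:Finset α)) ∆ b' = (b ∆ b') ∆ ({z}:Finset α) :=
            Stmt6Aux.symmDiff_single_right_comm b b' z
          have hodd : ¬ Even (((b ∆ ({z}:Finset α)) ∆ b').card) := by
            rw [heq, Stmt6Aux.parity_single]
            exact not_not_intro hDeven
          obtain ⟨w, hwD, hw⟩ := Stmt6Aux.single_flip _ B hstrong _ hy1 b' hb' hodd le_rfl
          rw [heq] at hwD
          obtain ⟨hwD', hwz⟩ := Stmt6Aux.mem_symmDiff_single hz hwD
          have hconv : (b ∆ ({z}:Finset α)) ∆ ({w}:Finset α) = b ∆ ({z,w}:Finset α) := by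
            rw [symmDiff_assoc, Stmt6Aux.pair_symmDiff (Ne.symm hwz)]
          rw [hconv] at hw
          exact hfin w hwD' hwz hw
        · exact hfin y hyD (fun h => hyz h) hy1
  · -- backward direction
    rintro ⟨⟨-, -, hLexch⟩, hLpar⟩
    have hEx : Stmt6Aux.Exch ((fun I : Finset α => if Even I.card then I else insert e₀ I) '' B) :=
      hLexch
    have hPar : Stmt6Aux.Par ((fun I : Finset α => if Even I.card then I else insert e₀ I) '' B) :=
      hLpar
    have hstrong : ∀ b ∈ B, ∀ b' ∈ B, ∀ x ∈ b ∆ b', ∃ y ∈ b ∆ b',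
        b ∆ ({x,y}:Finset α) ∈ B ∧ b' ∆ ({x,y}:Finset α) ∈ B := by
      intro b hb b' hb' x hx
      have hE0 : e₀ ∉ b := he₀b b hb
      have hE0' : e₀ ∉ b' := he₀b b' hb'
      have hxe : x ≠ e₀ := fun h => he (hDE hb hb' (h ▸ hx))
      by_cases hbe : Even b.card <;> by_cases hb'e : Even b'.card
      · -- even even
        obtain ⟨y, hyD, hyx, h1, h2⟩ :=
          Stmt6Aux.even_strong _ _ hEx hPar b (hmkE b hb hbe) b' (hmkE b' hb' hb'e) x hx le_rfl
        have hye : y ≠ e₀ := fun h => he (hDE hb hb' (h ▸ hyD))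
        have hpe : e₀ ∉ ({x,y}:Finset α) := by
          simp only [Finset.mem_insert, Finset.mem_singleton]
          push_neg
          exact ⟨Ne.symm hxe, Ne.symm hye⟩
        exact ⟨y, hyD, hM1 _ h1 (Stmt6Aux.not_mem_symmDiff hE0 hpe),
          hM1 _ h2 (Stmt6Aux.not_mem_symmDiff hE0' hpe)⟩
      · -- even odd
        have hdiff : b ∆ (insert e₀ b') = insert e₀ (b ∆ b') :=
          Stmt6Aux.symmDiff_insert_right hE0 hE0'
        have hx' : x ∈ b ∆ (insert e₀ b') := by
          rw [hdiff]; exact Finset.mem_insert_of_mem hx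
        obtain ⟨y, hyD, hyx, h1, h2⟩ :=
          Stmt6Aux.even_strong _ _ hEx hPar b (hmkE b hb hbe) _ (hmkO b' hb' hb'e) x hx' le_rfl
        rw [hdiff] at hyD
        by_cases hye : y = e₀
        · subst hye
          have e1 : b ∆ ({x,y}:Finset α) = insert y (b ∆ ({x}:Finset α)) := by
            rw [Finset.pair_comm]
            exact Stmt6Aux.symmDiff_pair_insert hE0 hxe
          have e2 : (insert y b') ∆ ({x,y}:Finset α) = b' ∆ ({x}:Finset α) := by
            rw [Finset.pair_comm]
            exact Stmt6Aux.insert_symmDiff_pair hE0' hxe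
          rw [e1] at h1
          rw [e2] at h2
          have hm1 : b ∆ ({x}:Finset α) ∈ B := by
            have h' := hM2 _ h1 (Finset.mem_insert_self _ _)
            rwa [Finset.erase_insert (Stmt6Aux.not_mem_symmDiff hE0 (by simp [Ne.symm hxe]))] at h'
          have hm2 : b' ∆ ({x}:Finset α) ∈ B :=
            hM1 _ h2 (Stmt6Aux.not_mem_symmDiff hE0' (by simp [Ne.symm hxe]))
          refine ⟨x, hx, ?_, ?_⟩ <;> rw [Stmt6Aux.pair_self] <;> assumption
        · have hyD' : y ∈ b ∆ b' := Finset.mem_of_mem_insert_of_ne hyD hye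
          have hpe : e₀ ∉ ({x,y}:Finset α) := by
            simp only [Finset.mem_insert, Finset.mem_singleton]
            push_neg
            exact ⟨Ne.symm hxe, fun h => hye h.symm⟩
          have e2 : (insert e₀ b') ∆ ({x,y}:Finset α) = insert e₀ (b' ∆ ({x,y}:Finset α)) :=
            Stmt6Aux.insert_symmDiff_left hE0' hpe
          rw [e2] at h2
          have hm2 : b' ∆ ({x,y}:Finset α) ∈ B := by
            have h' := hM2 _ h2 (Finset.mem_insert_self _ _)
            rwa [Finset.erase_insert (Stmt6Aux.not_mem_symmDiff hE0' hpe)] at h'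
          exact ⟨y, hyD', hM1 _ h1 (Stmt6Aux.not_mem_symmDiff hE0 hpe), hm2⟩
      · -- odd even
        have hdiff : (insert e₀ b) ∆ b' = insert e₀ (b ∆ b') :=
          Stmt6Aux.insert_symmDiff_left hE0 hE0'
        have hx' : x ∈ (insert e₀ b) ∆ b' := by
          rw [hdiff]; exact Finset.mem_insert_of_mem hx
        obtain ⟨y, hyD, hyx, h1, h2⟩ :=
          Stmt6Aux.even_strong _ _ hEx hPar _ (hmkO b hb hbe) b' (hmkE b' hb' hb'e) x hx' le_rfl
        rw [hdiff] at hyD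
        by_cases hye : y = e₀
        · subst hye
          have e1 : (insert y b) ∆ ({x,y}:Finset α) = b ∆ ({x}:Finset α) := by
            rw [Finset.pair_comm]
            exact Stmt6Aux.insert_symmDiff_pair hE0 hxe
          have e2 : b' ∆ ({x,y}:Finset α) = insert y (b' ∆ ({x}:Finset α)) := by
            rw [Finset.pair_comm]
            exact Stmt6Aux.symmDiff_pair_insert hE0' hxe
          rw [e1] at h1
          rw [e2] at h2
          have hm1 : b ∆ ({x}:Finset α) ∈ B :=
            hM1 _ h1 (Stmt6Aux.not_mem_symmDiff hE0 (by simp [Ne.symm hxe]))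
          have hm2 : b' ∆ ({x}:Finset α) ∈ B := by
            have h' := hM2 _ h2 (Finset.mem_insert_self _ _)
            rwa [Finset.erase_insert (Stmt6Aux.not_mem_symmDiff hE0' (by simp [Ne.symm hxe]))] at h'
          refine ⟨x, hx, ?_, ?_⟩ <;> rw [Stmt6Aux.pair_self] <;> assumption
        · have hyD' : y ∈ b ∆ b' := Finset.mem_of_mem_insert_of_ne hyD hye
          have hpe : e₀ ∉ ({x,y}:Finset α) := by
            simp only [Finset.mem_insert, Finset.mem_singleton]
            push_neg
            exact ⟨Ne.symm hxe, fun h => hye h.symm⟩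
          have e1 : (insert e₀ b) ∆ ({x,y}:Finset α) = insert e₀ (b ∆ ({x,y}:Finset α)) :=
            Stmt6Aux.insert_symmDiff_left hE0 hpe
          rw [e1] at h1
          have hm1 : b ∆ ({x,y}:Finset α) ∈ B := by
            have h' := hM2 _ h1 (Finset.mem_insert_self _ _)
            rwa [Finset.erase_insert (Stmt6Aux.not_mem_symmDiff hE0 hpe)] at h'
          exact ⟨y, hyD', hm1, hM1 _ h2 (Stmt6Aux.not_mem_symmDiff hE0' hpe)⟩
      · -- odd odd
        have hdiff : (insert e₀ b) ∆ (insert e₀ b') = b ∆ b' :=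
          Stmt6Aux.insert_insert_symmDiff hE0 hE0'
        have hx' : x ∈ (insert e₀ b) ∆ (insert e₀ b') := by rw [hdiff]; exact hx
        obtain ⟨y, hyD, hyx, h1, h2⟩ :=
          Stmt6Aux.even_strong _ _ hEx hPar _ (hmkO b hb hbe) _ (hmkO b' hb' hb'e) x hx' le_rfl
        rw [hdiff] at hyD
        have hye : y ≠ e₀ := fun h => he (hDE hb hb' (h ▸ hyD))
        have hpe : e₀ ∉ ({x,y}:Finset α) := by
          simp only [Finset.mem_insert, Finset.mem_singleton]
          push_neg
          exact ⟨Ne.symm hxe, Ne.symm hye⟩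
        have e1 : (insert e₀ b) ∆ ({x,y}:Finset α) = insert e₀ (b ∆ ({x,y}:Finset α)) :=
          Stmt6Aux.insert_symmDiff_left hE0 hpe
        have e2 : (insert e₀ b') ∆ ({x,y}:Finset α) = insert e₀ (b' ∆ ({x,y}:Finset α)) :=
          Stmt6Aux.insert_symmDiff_left hE0' hpe
        rw [e1] at h1
        rw [e2] at h2
        have hm1 : b ∆ ({x,y}:Finset α) ∈ B := by
          have h' := hM2 _ h1 (Finset.mem_insert_self _ _)
          rwa [Finset.erase_insert (Stmt6Aux.not_mem_symmDiff hE0 hpe)] at h'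
        have hm2 : b' ∆ ({x,y}:Finset α) ∈ B := by
          have h' := hM2 _ h2 (Finset.mem_insert_self _ _)
          rwa [Finset.erase_insert (Stmt6Aux.not_mem_symmDiff hE0' hpe)] at h'
        exact ⟨y, hyD, hm1, hm2⟩
    exact ⟨⟨hne, hsub, fun b hb b' hb' x hx =>
      (hstrong b hb b' hb' x hx).imp (fun y h => ⟨h.1, h.2.1⟩)⟩, hstrong⟩
end

section
/- The Δ-matroid on ground set {1,2,3} with bases {∅, {1}, {2}, {3}, {1,2,3}} is a Δ-matroid (satisfies the symmetric exchange axiom) but is not strong (fails the strong basis exchange property). -/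
open scoped symmDiff

/-- the set system on `{1,2,3}` with bases `∅, {1}, {2}, {3}, {1,2,3}`
is a Δ-matroid but is not strong. -/
theorem stmt9 :
    IsDeltaMatroid ({1, 2, 3} : Finset ℕ)
        ({∅, {1}, {2}, {3}, {1, 2, 3}} : Set (Finset ℕ)) ∧
      ¬ IsStrongDeltaMatroid ({1, 2, 3} : Finset ℕ)
        ({∅, {1}, {2}, {3}, {1, 2, 3}} : Set (Finset ℕ)) := by
  constructor
  · refine ⟨⟨∅, by left; rfl⟩, ?_, ?_⟩
    · intro b hb
      simp only [Set.mem_insert_iff, Set.mem_singleton_iff] at hb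
      rcases hb with h|h|h|h|h <;> subst h <;> decide
    · intro b hb b' hb'
      simp only [Set.mem_insert_iff, Set.mem_singleton_iff] at hb hb' ⊢
      rcases hb with h|h|h|h|h <;> rcases hb' with h'|h'|h'|h'|h' <;>
        subst h <;> subst h' <;> decide
  · rintro ⟨-, h⟩
    have := h ∅ (by left; rfl) {1, 2, 3} (by right; right; right; right; rfl) 1 (by decide)
    simp only [Set.mem_insert_iff, Set.mem_singleton_iff] at this
    revert this
    decide
end

section
/- The Δ-matroid on ground set {1,2,3} with bases {∅, {1}, {2}, {3}, {1,2,3}} is representable over any field of characteristic not two: it equals D(M) for the 3×3 symmetric matrix M with all diagonal entries 1 and all off-diagonal entries -1, where D(M) has as bases the subsets I with det(M[I]) ≠ 0. -/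
open Matrix

lemma det_psub_pair {K : Type*} [CommRing K] (M : Matrix (Fin 3) (Fin 3) K)
    (a b : Fin 3) (hab : a ≠ b) :
    (psub M {a, b}).det = M a a * M b b - M a b * M b a := by
  let e : Fin 2 ≃ ({a, b} : Finset (Fin 3)) :=
    { toFun := ![⟨a, by simp⟩, ⟨b, by simp⟩]
      invFun := fun x => if (x : Fin 3) = a then 0 else 1
      left_inv := by
        intro i; fin_cases i <;> simp [hab.symm]
      right_inv := by
        rintro ⟨x, hx⟩
        simp only [Finset.mem_insert, Finset.mem_singleton] at hx
        rcases hx with h | h <;> subst h <;> simp [hab.symm] }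
  rw [← Matrix.det_submatrix_equiv_self e (psub M {a, b}), Matrix.det_fin_two]
  simp [psub, e, Matrix.submatrix_apply]

lemma det_psub_single {K : Type*} [CommRing K] (M : Matrix (Fin 3) (Fin 3) K)
    (a : Fin 3) : (psub M {a}).det = M a a := by
  letI : Unique (({a} : Finset (Fin 3)) : Type) :=
    ⟨⟨⟨a, Finset.mem_singleton_self a⟩⟩, fun x => Subtype.ext (Finset.mem_singleton.mp x.2)⟩
  rw [Matrix.det_unique]
  rfl

lemma det_psub_triple {K : Type*} [CommRing K] (M : Matrix (Fin 3) (Fin 3) K) :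
    (psub M {0, 1, 2}).det =
      M 0 0 * (M 1 1 * M 2 2 - M 1 2 * M 2 1) -
      M 0 1 * (M 1 0 * M 2 2 - M 1 2 * M 2 0) +
      M 0 2 * (M 1 0 * M 2 1 - M 1 1 * M 2 0) := by
  let e : Fin 3 ≃ ({0, 1, 2} : Finset (Fin 3)) :=
    { toFun := fun i => ⟨i, by fin_cases i <;> decide⟩
      invFun := fun x => x
      left_inv := fun i => rfl
      right_inv := fun x => rfl }
  rw [← Matrix.det_submatrix_equiv_self e (psub M {0, 1, 2}), Matrix.det_fin_three]
  simp [psub, e, Matrix.submatrix_apply]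
  ring

lemma det_psub_empty {K : Type*} [CommRing K] (M : Matrix (Fin 3) (Fin 3) K) :
    (psub M (∅ : Finset (Fin 3))).det = 1 := by
  haveI : IsEmpty ((∅ : Finset (Fin 3)) : Type) := by
    constructor; rintro ⟨x, hx⟩; exact absurd hx (Finset.notMem_empty x)
  exact Matrix.det_isEmpty

/-- over any field of characteristic not two, the 3×3 symmetric matrix
with diagonal entries 1 and off-diagonal entries -1 represents the Δ-matroid with
bases `∅, {1}, {2}, {3}, {1,2,3}`. -/
theorem stmt10 {K : Type*} [Field K] (h2 : (2 : K) ≠ 0) :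
    {I : Finset (Fin 3) |
        (psub (Matrix.of fun i j : Fin 3 => if i = j then (1 : K) else -1) I).det ≠ 0}
      = ({∅, {0}, {1}, {2}, {0, 1, 2}} : Set (Finset (Fin 3))) := by
  have h4 : (4 : K) ≠ 0 := by
    intro h
    apply h2
    have : (2 : K) * 2 = 0 := by rw [← h]; norm_num
    rcases mul_eq_zero.mp this with h' | h' <;> exact h'
  ext I
  have hI : I = ∅ ∨ I = {0} ∨ I = {1} ∨ I = {2} ∨ I = {0,1} ∨ I = {0,2} ∨ I = {1,2} ∨ I = {0,1,2} := by
    revert I; decide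
  simp only [Set.mem_setOf_eq, Set.mem_insert_iff, Set.mem_singleton_iff]
  have f01 : ((0:Fin 3) = 1) = False := by decide
  have f10 : ((1:Fin 3) = 0) = False := by decide
  have f02 : ((0:Fin 3) = 2) = False := by decide
  have f20 : ((2:Fin 3) = 0) = False := by decide
  have f12 : ((1:Fin 3) = 2) = False := by decide
  have f21 : ((2:Fin 3) = 1) = False := by decide
  rcases hI with h | h | h | h | h | h | h | h <;> subst h
  · rw [det_psub_empty]; simp
  · rw [det_psub_single]
    refine iff_of_true ?_ (by decide)
    simp
  · rw [det_psub_single]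
    refine iff_of_true ?_ (by decide)
    simp
  · rw [det_psub_single]
    refine iff_of_true ?_ (by decide)
    simp
  · rw [det_psub_pair _ _ _ (by decide)]
    refine iff_of_false (not_not.mpr ?_) (by decide)
    simp [f01, f10]
  · rw [det_psub_pair _ _ _ (by decide)]
    refine iff_of_false (not_not.mpr ?_) (by decide)
    simp [f02, f20]
  · rw [det_psub_pair _ _ _ (by decide)]
    refine iff_of_false (not_not.mpr ?_) (by decide)
    simp [f12, f21]
  · rw [det_psub_triple]
    refine iff_of_true ?_ (by decide)
    simp only [Matrix.of_apply, f01, f10, f02, f20, f12, f21, if_false, eq_self_iff_true, if_true]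
    intro h
    exact h4 (by linear_combination -h)
end

section
/- Let A be an n-by-n real skew-symmetric matrix and v ∈ ℝⁿ. Then the multivariate polynomial f(z₁,…,zₙ) = Σ_{I ⊆ [n]} det((A + v vᵀ)[I]) · Π_{i ∈ I} z_i is Hurwitz stable: f(z₁,…,zₙ) ≠ 0 whenever Re(z_i) > 0 for all i. -/
set_option linter.unnecessarySeqFocus false

open Matrix

lemma det_piecewise {n : ℕ} (N : Matrix (Fin n) (Fin n) ℂ) (s : Finset (Fin n)) :
    (Matrix.of (s.piecewise (N : Fin n → Fin n → ℂ) (1 : Matrix (Fin n) (Fin n) ℂ))).det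
      = (psub N s).det := by
  classical
  rw [← Matrix.det_submatrix_equiv_self (Equiv.sumCompl (· ∈ s))]
  have : (Matrix.of (s.piecewise (N : Fin n → Fin n → ℂ)
      (1 : Matrix (Fin n) (Fin n) ℂ))).submatrix (Equiv.sumCompl (· ∈ s))
      (Equiv.sumCompl (· ∈ s)) =
      Matrix.fromBlocks (psub N s) (Matrix.of fun (i : s) (j : {a : Fin n // a ∉ s}) => N i.1 j.1)
        0 (1 : Matrix {a : Fin n // a ∉ s} {a : Fin n // a ∉ s} ℂ) := by
    ext i j
    rcases i with i | i <;> rcases j with j | j <;>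
      simp [Finset.piecewise, fromBlocks, psub, Matrix.one_apply, i.2, j.2,
        Subtype.ext_iff] <;> aesop
  rw [this, Matrix.det_fromBlocks_zero₂₁, Matrix.det_one, mul_one]

lemma key_identity {n : ℕ} (N : Matrix (Fin n) (Fin n) ℂ) (z : Fin n → ℂ) :
    (∑ I : Finset (Fin n), (psub N I).det * ∏ i ∈ I, z i)
      = (1 + Matrix.of (fun i j => z i * N i j)).det := by
  classical
  set f := (Matrix.detRowAlternating :
      (Fin n → ℂ) [⋀^Fin n]→ₗ[ℂ] ℂ).toMultilinearMap with hf
  have h1 : (1 + Matrix.of (fun i j => z i * N i j) : Matrix (Fin n) (Fin n) ℂ)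
      = Matrix.of ((fun i => z i • N i) + (fun i => (1 : Matrix (Fin n) (Fin n) ℂ) i)) := by
    ext i j
    simp [Matrix.add_apply, mul_comm, add_comm]
  rw [h1]
  have h2 : (Matrix.of ((fun i => z i • N i)
        + (fun i => (1 : Matrix (Fin n) (Fin n) ℂ) i))).det
      = ∑ s : Finset (Fin n), f (s.piecewise (fun i => z i • N i)
          (fun i => (1 : Matrix (Fin n) (Fin n) ℂ) i)) :=
    f.map_add_univ _ _
  rw [h2]
  apply Finset.sum_congr rfl
  intro s _
  have h3 : (s.piecewise (fun i => z i • N i)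
      (fun i => (1 : Matrix (Fin n) (Fin n) ℂ) i)) =
      fun i => (if i ∈ s then z i else 1) •
        (s.piecewise (N : Fin n → Fin n → ℂ) (1 : Matrix (Fin n) (Fin n) ℂ)) i := by
    funext i
    by_cases hi : i ∈ s <;> simp [Finset.piecewise, hi]
  rw [h3, f.map_smul_univ]
  have h4 : (∏ i : Fin n, if i ∈ s then z i else 1) = ∏ i ∈ s, z i := by
    rw [Finset.prod_ite_mem, Finset.univ_inter]
  rw [h4, smul_eq_mul, mul_comm]
  congr 1
  exact (det_piecewise N s).symm

/-- for a real skew-symmetric `A` and `v ∈ ℝⁿ`, the polynomial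
`f(z) = Σ_I det((A + v vᵀ)[I]) Π_{i∈I} z_i` is Hurwitz stable. -/
theorem stmt11 {n : ℕ} (A : Matrix (Fin n) (Fin n) ℝ) (hskew : Aᵀ = -A)
    (v : Fin n → ℝ) :
    ∀ z : Fin n → ℂ, (∀ i, 0 < (z i).re) →
      (∑ I : Finset (Fin n),
          ((psub (A + Matrix.vecMulVec v v) I).det : ℂ) * ∏ i ∈ I, z i) ≠ 0 := by
  classical
  intro z hz
  set M : Matrix (Fin n) (Fin n) ℝ := A + Matrix.vecMulVec v v with hM
  set Mc : Matrix (Fin n) (Fin n) ℂ := M.map (Complex.ofReal) with hMc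
  have hcast : ∀ I : Finset (Fin n),
      ((psub M I).det : ℂ) = (psub Mc I).det := by
    intro I
    have : psub Mc I = (psub M I).map (Complex.ofReal) := rfl
    rw [this]
    exact RingHom.map_det Complex.ofRealHom (psub M I)
  have hsum : (∑ I : Finset (Fin n), ((psub M I).det : ℂ) * ∏ i ∈ I, z i)
      = (1 + Matrix.of (fun i j => z i * Mc i j)).det := by
    rw [← key_identity]
    exact Finset.sum_congr rfl fun I _ => by rw [hcast]
  rw [hsum]
  intro hdet
  -- get a nonzero kernel vector
  obtain ⟨x, hx0, hxk⟩ := (Matrix.exists_mulVec_eq_zero_iff).2 hdet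
  set y : Fin n → ℂ := Mc *ᵥ x with hy
  have hrow : ∀ i, x i + z i * y i = 0 := by
    intro i
    have h := congrFun hxk i
    simp only [Matrix.mulVec, dotProduct, Matrix.add_apply, Matrix.of_apply,
      Pi.zero_apply] at h
    have h1r : ∑ j, ((1 : Matrix (Fin n) (Fin n) ℂ) i j) * x j = x i := by
      simp [Matrix.one_apply]
    calc x i + z i * y i
        = ∑ j, ((1 : Matrix (Fin n) (Fin n) ℂ) i j) * x j
            + z i * ∑ j, Mc i j * x j := by rw [h1r]; rfl
      _ = ∑ j, ((1 : Matrix (Fin n) (Fin n) ℂ) i j + z i * Mc i j) * x j := by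
          rw [Finset.mul_sum, ← Finset.sum_add_distrib]
          exact Finset.sum_congr rfl fun j _ => by ring
      _ = 0 := h
  have hy0 : y ≠ 0 := by
    intro h
    apply hx0
    funext i
    have := hrow i
    rw [h] at this
    simpa using this
  -- T = ∑ conj (x i) * y i
  set T : ℂ := ∑ i, (starRingEnd ℂ) (x i) * y i with hT
  -- First computation: T = x* Mc x, real part ≥ 0
  have hTsum : T = ∑ i, ∑ j, (starRingEnd ℂ) (x i) * Mc i j * x j := by
    rw [hT]
    apply Finset.sum_congr rfl
    intro i _
    rw [hy]
    simp [Matrix.mulVec, dotProduct, Finset.mul_sum, mul_assoc]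
  have hMcapply : ∀ i j, Mc i j = (A i j : ℂ) + (v i : ℂ) * (v j : ℂ) := by
    intro i j
    simp [hMc, hM, Matrix.vecMulVec_apply]
  -- split T = Q + P
  set Q : ℂ := ∑ i, ∑ j, (starRingEnd ℂ) (x i) * (A i j : ℂ) * x j with hQ
  set w : ℂ := ∑ j, (v j : ℂ) * x j with hw
  have hsplit : T = Q + (starRingEnd ℂ) w * w := by
    rw [hTsum, hQ]
    have : (starRingEnd ℂ) w * w
        = ∑ i, ∑ j, (starRingEnd ℂ) (x i) * ((v i : ℂ) * (v j : ℂ)) * x j := by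
      rw [hw, map_sum, Finset.sum_mul]
      apply Finset.sum_congr rfl
      intro i _
      rw [Finset.mul_sum]
      apply Finset.sum_congr rfl
      intro j _
      simp only [_root_.map_mul, Complex.conj_ofReal]
      ring
    rw [this, ← Finset.sum_add_distrib]
    apply Finset.sum_congr rfl
    intro i _
    rw [← Finset.sum_add_distrib]
    apply Finset.sum_congr rfl
    intro j _
    rw [hMcapply i j]
    ring
  have hQre : Q.re = 0 := by
    have hconj : (starRingEnd ℂ) Q = -Q := by
      rw [hQ, map_sum]
      have hterm : ∀ i j : Fin n,
          (starRingEnd ℂ) ((starRingEnd ℂ) (x i) * (A i j : ℂ) * x j)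
            = x i * (A i j : ℂ) * (starRingEnd ℂ) (x j) := by
        intro i j
        simp only [_root_.map_mul, Complex.conj_conj, Complex.conj_ofReal]
      simp_rw [map_sum, hterm]
      rw [Finset.sum_comm, ← Finset.sum_neg_distrib]
      apply Finset.sum_congr rfl
      intro b _
      rw [← Finset.sum_neg_distrib]
      apply Finset.sum_congr rfl
      intro a _
      have hA : (A a b : ℂ) = -(A b a : ℂ) := by
        have := congrFun (congrFun hskew a) b
        simp only [Matrix.transpose_apply, Matrix.neg_apply] at this
        push_cast [this]
        ring
      rw [hA]
      ring
    have := congrArg Complex.re hconj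
    simp [Complex.conj_re] at this
    linarith
  have hTre_nonneg : 0 ≤ T.re := by
    rw [hsplit]
    simp only [Complex.add_re]
    rw [hQre, zero_add]
    rw [mul_comm, Complex.mul_conj]
    simpa using Complex.normSq_nonneg w
  -- Second computation: T = -∑ conj(z i) * normSq (y i), real part < 0
  have hTre_neg : T.re < 0 := by
    have hTalt : T = -∑ i, (starRingEnd ℂ) (z i) * (Complex.normSq (y i) : ℂ) := by
      rw [hT, ← Finset.sum_neg_distrib]
      apply Finset.sum_congr rfl
      intro i _
      have hxi : x i = -(z i * y i) := by
        have := hrow i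
        linear_combination this
      rw [hxi]
      calc (starRingEnd ℂ) (-(z i * y i)) * y i
          = -((starRingEnd ℂ) (z i) * ((starRingEnd ℂ) (y i) * y i)) := by
            rw [map_neg, _root_.map_mul]; ring
        _ = -((starRingEnd ℂ) (z i) * (Complex.normSq (y i) : ℂ)) := by
            rw [mul_comm ((starRingEnd ℂ) (y i)) (y i), Complex.mul_conj]
    rw [hTalt]
    simp only [Complex.neg_re, neg_neg, neg_lt_zero]
    have hre : ∀ i, ((starRingEnd ℂ) (z i) * (Complex.normSq (y i) : ℂ)).re
        = (z i).re * Complex.normSq (y i) := by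
      intro i
      simp [Complex.mul_re, Complex.conj_re, Complex.conj_im, Complex.ofReal_re,
        Complex.ofReal_im]
    rw [Complex.re_sum]
    simp only [hre]
    have : ∃ i, y i ≠ 0 := by
      by_contra h
      push_neg at h
      exact hy0 (funext h)
    obtain ⟨i0, hi0⟩ := this
    have hpos : 0 < (z i0).re * Complex.normSq (y i0) :=
      mul_pos (hz i0) (Complex.normSq_pos.2 hi0)
    calc (0:ℝ) < (z i0).re * Complex.normSq (y i0) := hpos
    _ ≤ ∑ i, (z i).re * Complex.normSq (y i) := by
        apply Finset.single_le_sum (f := fun i => (z i).re * Complex.normSq (y i))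
        · intro i _
          exact mul_nonneg (le_of_lt (hz i)) (Complex.normSq_nonneg _)
        · exact Finset.mem_univ i0
  linarith
end

section
/- There is no 6-by-6 real matrix M such that det(M[X]) = 1 for X in the family 𝓠₆ and det(M[X]) = 0 for all other subsets X ⊆ {1,…,6}, where 𝓠₆ consists of: ∅; all singletons; all pairs {i, i+2} (mod 6) and the three pairs {i, i+3} for i = 1,2,3; all triples {i, i+1, i+2} (mod 6) together with {1,3,5} and {2,4,6}; and all 4-element subsets of {1,…,6} except the three sets {1,…,6} \ {i, i+3} for i = 1,2,3. -/
open Matrix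

/-- The quasi-trees of the bouquet `ℂ₆`: `∅`; all singletons; all pairs `{i, i+2}` and
`{i, i+3}`; all consecutive triples together with `{1,3,5}` and `{2,4,6}`; and all
4-element subsets except the complements of the pairs `{i, i+3}` (indices mod 6). -/
def Q6 : Set (Finset (Fin 6)) :=
  {X | X = ∅ ∨ (∃ i, X = {i}) ∨ (∃ i, X = {i, i + 2}) ∨ (∃ i, X = {i, i + 3}) ∨
    (∃ i, X = {i, i + 1, i + 2}) ∨ X = {0, 2, 4} ∨ X = {1, 3, 5} ∨
    (X.card = 4 ∧ ¬ ∃ i, X = Finset.univ \ {i, i + 3})}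

/-!
Write `a i = M i (i + 2)` and `b i = M (i + 2) i`. The conditions on sets of size at most two
force a unit diagonal, `M i (i + 1) * M (i + 1) i = 1` and `a i * b i = 0`, and the consecutive
triple `{i, i + 1, i + 2}` then forces exactly one of `a i`, `b i` to be nonzero. If `a i ≠ 0` but
`a (i + 1) = 0`, the vanishing minors on `{i, i + 2, i + 3}` and `{i, i + 1, i + 3}` kill two more
entries, after which the minor on `{i, …, i + 3}` contradicts the triple conditions. Hence around
the cycle either every `a i` vanishes or none does, so exactly one of `a 0 * a 2 * a 4` and
`b 0 * b 2 * b 4` is nonzero; but the minor on the quasi-tree `{0, 2, 4}` says their sum is `0`.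
-/

theorem det_psub_image_s16 {m R : Type*} [DecidableEq m] [CommRing R] (M : Matrix m m R) {k : ℕ}
    {v : Fin k → m} (hv : v.Injective) :
    (psub M (Finset.univ.image v)).det = (M.submatrix v v).det := by
  let e : Fin k ≃ Finset.univ.image v :=
    Equiv.ofBijective (fun j => ⟨v j, by simp⟩) <| by
      refine (Fintype.bijective_iff_injective_and_card _).2
        ⟨fun a b hab => hv (congrArg Subtype.val hab), ?_⟩
      simp [Finset.card_image_of_injective _ hv]
  rw [← det_submatrix_equiv_self e]
  rfl

theorem det_submatrix_fin_two_of_diag_eq_one {m R : Type*} [CommRing R] {M : Matrix m m R}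
    (hM : ∀ i, M i i = 1) (a b : m) :
    (M.submatrix ![a, b] ![a, b]).det = 1 - M a b * M b a := by
  rw [det_fin_two]
  simp [hM]

theorem det_submatrix_fin_three_of_diag_eq_one {m R : Type*} [CommRing R] {M : Matrix m m R}
    (hM : ∀ i, M i i = 1) (a b c : m) :
    (M.submatrix ![a, b, c] ![a, b, c]).det =
      1 - M a b * M b a - M b c * M c b - M a c * M c a
        + M a b * M b c * M c a + M a c * M b a * M c b := by
  rw [det_fin_three]
  simp only [submatrix_apply, cons_val_zero, cons_val_one, cons_val, hM]
  ring

open Fin.NatCast in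
theorem Fin.forall_of_imp_add_one {n : ℕ} [NeZero n] {P : Fin n → Prop}
    (h : ∀ i, P i → P (i + 1)) {j : Fin n} (hj : P j) (k : Fin n) : P k := by
  have hP : ∀ m : ℕ, P (j + (m : Fin n)) := fun m => by
    induction m with
    | zero => simpa using hj
    | succ m ih => simpa [add_assoc] using h _ ih
  simpa using hP (k - j).val

def DetectsQ6 (M : Matrix (Fin 6) (Fin 6) ℝ) : Prop :=
  ∀ X : Finset (Fin 6), (X ∈ Q6 → (psub M X).det = 1) ∧ (X ∉ Q6 → (psub M X).det = 0)

namespace DetectsQ6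

variable {M : Matrix (Fin 6) (Fin 6) ℝ}

theorem det_submatrix_eq_one (hM : DetectsQ6 M) {k : ℕ} (v : Fin 6 → Fin k → Fin 6)
    (hv : ∀ i, (v i).Injective) (hX : ∀ i, Finset.univ.image (v i) ∈ Q6) (i : Fin 6) :
    (M.submatrix (v i) (v i)).det = 1 := by
  rw [← det_psub_image_s16 M (hv i)]
  exact (hM _).1 (hX i)

theorem det_submatrix_eq_zero (hM : DetectsQ6 M) {k : ℕ} (v : Fin 6 → Fin k → Fin 6)
    (hv : ∀ i, (v i).Injective) (hX : ∀ i, Finset.univ.image (v i) ∉ Q6) (i : Fin 6) :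
    (M.submatrix (v i) (v i)).det = 0 := by
  rw [← det_psub_image_s16 M (hv i)]
  exact (hM _).2 (hX i)

theorem apply_self (hM : DetectsQ6 M) (i : Fin 6) : M i i = 1 := by
  have h := hM.det_submatrix_eq_one (fun j => ![j]) (fun _ => Function.injective_of_subsingleton _)
    (by unfold Q6; decide) i
  rwa [det_unique] at h

theorem mul_apply_add_one (hM : DetectsQ6 M) (i : Fin 6) : M i (i + 1) * M (i + 1) i = 1 := by
  have h := hM.det_submatrix_eq_zero (fun j => ![j, j + 1]) (by decide)
    (by unfold Q6; decide) i
  rw [det_submatrix_fin_two_of_diag_eq_one hM.apply_self] at h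
  linarith

theorem mul_apply_add_two (hM : DetectsQ6 M) (i : Fin 6) : M i (i + 2) * M (i + 2) i = 0 := by
  have h := hM.det_submatrix_eq_one (fun j => ![j, j + 2]) (by decide)
    (by unfold Q6; decide) i
  rw [det_submatrix_fin_two_of_diag_eq_one hM.apply_self] at h
  linarith

theorem mul_apply_add_three (hM : DetectsQ6 M) (i : Fin 6) : M i (i + 3) * M (i + 3) i = 0 := by
  have h := hM.det_submatrix_eq_one (fun j => ![j, j + 3]) (by decide)
    (by unfold Q6; decide) i
  rw [det_submatrix_fin_two_of_diag_eq_one hM.apply_self] at h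
  linarith

theorem triangle_consecutive (hM : DetectsQ6 M) (i : Fin 6) :
    M i (i + 1) * M (i + 1) (i + 2) * M (i + 2) i
      + M i (i + 2) * M (i + 1) i * M (i + 2) (i + 1) = 2 := by
  have h := hM.det_submatrix_eq_one (fun j => ![j, j + 1, j + 2]) (by decide)
    (by unfold Q6; decide) i
  have h1 : M (i + 1) (i + 2) * M (i + 2) (i + 1) = 1 := by
    simpa [add_assoc] using hM.mul_apply_add_one (i + 1)
  rw [det_submatrix_fin_three_of_diag_eq_one hM.apply_self] at h
  linear_combination h + hM.mul_apply_add_one i + h1 + hM.mul_apply_add_two i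

theorem triangle_skip_add_one (hM : DetectsQ6 M) (i : Fin 6) :
    M i (i + 2) * M (i + 2) (i + 3) * M (i + 3) i
      + M i (i + 3) * M (i + 2) i * M (i + 3) (i + 2) = 0 := by
  have h := hM.det_submatrix_eq_zero (fun j => ![j, j + 2, j + 3]) (by decide)
    (by unfold Q6; decide) i
  have h2 : M (i + 2) (i + 3) * M (i + 3) (i + 2) = 1 := by
    simpa [add_assoc] using hM.mul_apply_add_one (i + 2)
  rw [det_submatrix_fin_three_of_diag_eq_one hM.apply_self] at h
  linear_combination h + hM.mul_apply_add_two i + h2 + hM.mul_apply_add_three i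

theorem triangle_skip_add_two (hM : DetectsQ6 M) (i : Fin 6) :
    M i (i + 1) * M (i + 1) (i + 3) * M (i + 3) i
      + M i (i + 3) * M (i + 1) i * M (i + 3) (i + 1) = 0 := by
  have h := hM.det_submatrix_eq_zero (fun j => ![j, j + 1, j + 3]) (by decide)
    (by unfold Q6; decide) i
  have h1 : M (i + 1) (i + 3) * M (i + 3) (i + 1) = 0 := by
    simpa [add_assoc] using hM.mul_apply_add_two (i + 1)
  rw [det_submatrix_fin_three_of_diag_eq_one hM.apply_self] at h
  linear_combination h + hM.mul_apply_add_one i + h1 + hM.mul_apply_add_three i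

theorem quadrangle_consecutive (hM : DetectsQ6 M) (i : Fin 6) (h03 : M i (i + 3) = 0)
    (h13 : M (i + 1) (i + 3) = 0) (h20 : M (i + 2) i = 0) (h30 : M (i + 3) i = 0) :
    M (i + 2) (i + 3) * M (i + 3) (i + 1) * (M i (i + 2) * M (i + 1) i - M (i + 1) (i + 2))
      = 0 := by
  have h := hM.det_submatrix_eq_one (fun j => ![j, j + 1, j + 2, j + 3]) (by decide)
    (by unfold Q6; decide) i
  rw [det_succ_row_zero] at h
  simp only [Fin.sum_univ_succ, Fin.sum_univ_zero, det_fin_three, submatrix_apply] at h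
  simp [Fin.succAbove, Fin.lt_def, hM.apply_self, h03, h13, h20, h30] at h
  have h1 : M (i + 1) (i + 2) * M (i + 2) (i + 1) = 1 := by
    simpa [add_assoc] using hM.mul_apply_add_one (i + 1)
  linear_combination -h + (M (i + 2) (i + 3) * M (i + 3) (i + 2) - 1) * hM.mul_apply_add_one i
    - h1 + hM.triangle_consecutive i - M i (i + 1) * M (i + 1) (i + 2) * h20

theorem apply_add_two_eq_zero_iff (hM : DetectsQ6 M) (i : Fin 6) :
    M i (i + 2) = 0 ↔ M (i + 2) i ≠ 0 := by
  constructor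
  · intro h h'
    simpa [h, h'] using hM.triangle_consecutive i
  · intro h
    exact (mul_eq_zero.1 (hM.mul_apply_add_two i)).resolve_right h

theorem apply_add_one_add_two_ne_zero (hM : DetectsQ6 M) {i : Fin 6} (ha : M i (i + 2) ≠ 0) :
    M (i + 1) (i + 1 + 2) ≠ 0 := by
  rw [show i + 1 + 2 = i + 3 by rw [add_assoc]; rfl]
  intro h13
  have h20 : M (i + 2) i = 0 := by simpa [ha] using hM.mul_apply_add_two i
  have t0 : M i (i + 2) * M (i + 1) i * M (i + 2) (i + 1) = 2 := by
    simpa [h20] using hM.triangle_consecutive i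
  have t1 : M (i + 1) (i + 2) * M (i + 2) (i + 3) * M (i + 3) (i + 1) = 2 := by
    simpa [add_assoc, h13] using hM.triangle_consecutive (i + 1)
  have hr : M (i + 2) (i + 3) ≠ 0 := by rintro h; simp [h] at t1
  have hs : M (i + 3) (i + 1) ≠ 0 := by rintro h; simp [h] at t1
  have hp' : M (i + 1) i ≠ 0 := by rintro h; simp [h] at t0
  have h30 : M (i + 3) i = 0 := by simpa [h20, ha, hr] using hM.triangle_skip_add_one i
  have h03 : M i (i + 3) = 0 := by simpa [h13, h30, hp', hs] using hM.triangle_skip_add_two i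
  have hq : M i (i + 2) * M (i + 1) i = M (i + 1) (i + 2) := by
    simpa [hr, hs, sub_eq_zero] using hM.quadrangle_consecutive i h03 h13 h20 h30
  have h1 : M (i + 1) (i + 2) * M (i + 2) (i + 1) = 1 := by
    simpa [add_assoc] using hM.mul_apply_add_one (i + 1)
  rw [hq, h1] at t0
  norm_num at t0

theorem forall_apply_add_two_ne_zero_or_eq_zero (hM : DetectsQ6 M) :
    (∀ i, M i (i + 2) ≠ 0) ∨ ∀ i, M i (i + 2) = 0 := by
  by_cases h : ∃ j, M j (j + 2) ≠ 0
  · obtain ⟨j, hj⟩ := h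
    exact Or.inl (Fin.forall_of_imp_add_one (fun _ => hM.apply_add_one_add_two_ne_zero) hj)
  · push Not at h
    exact Or.inr h

theorem triangle_even (hM : DetectsQ6 M) :
    M 0 2 * M 2 4 * M 4 0 + M 0 4 * M 2 0 * M 4 2 = 0 := by
  have h := (hM {0, 2, 4}).1 (by unfold Q6; decide)
  rw [show ({0, 2, 4} : Finset (Fin 6)) = Finset.univ.image ![0, 2, 4] by decide,
    det_psub_image_s16 M (by decide), det_submatrix_fin_three_of_diag_eq_one hM.apply_self] at h
  have h0 : M 0 2 * M 2 0 = 0 := hM.mul_apply_add_two 0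
  have h2 : M 2 4 * M 4 2 = 0 := hM.mul_apply_add_two 2
  have h4 : M 4 0 * M 0 4 = 0 := hM.mul_apply_add_two 4
  linear_combination h + h0 + h2 + h4

end DetectsQ6

/-- no 6×6 real matrix detects the quasi-trees of `ℂ₆`. -/
theorem stmt16 :
    ¬ ∃ M : Matrix (Fin 6) (Fin 6) ℝ, ∀ X : Finset (Fin 6),
        (X ∈ Q6 → (psub M X).det = 1) ∧ (X ∉ Q6 → (psub M X).det = 0) := by
  rintro ⟨M, hM : DetectsQ6 M⟩
  have key := hM.triangle_even
  rcases hM.forall_apply_add_two_ne_zero_or_eq_zero with h | h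
  · have h20 : M 2 0 = 0 := (mul_eq_zero.1 (hM.mul_apply_add_two 0)).resolve_left (h 0)
    have hfwd : M 0 2 * M 2 4 * M 4 0 ≠ 0 := mul_ne_zero (mul_ne_zero (h 0) (h 2)) (h 4)
    exact hfwd (by simpa [h20] using key)
  · have hb := hM.apply_add_two_eq_zero_iff
    have hbwd : M 0 4 * M 2 0 * M 4 2 ≠ 0 :=
      mul_ne_zero (mul_ne_zero ((hb 4).1 (h 4)) ((hb 0).1 (h 0))) ((hb 2).1 (h 2))
    have h02 : M 0 2 = 0 := h 0
    exact hbwd (by simpa [h02] using key)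
end

section
/- The polynomial x⁵ + 5x⁴ + 5x³ + 5x² + 5x + 1 has a complex root with strictly positive real part; in particular it is not Hurwitz stable. -/
/-- `x⁵ + 5x⁴ + 5x³ + 5x² + 5x + 1` has a complex root with strictly
positive real part; in particular it is not Hurwitz stable. -/
theorem stmt17 :
    (∃ z : ℂ, 0 < z.re ∧ z ^ 5 + 5 * z ^ 4 + 5 * z ^ 3 + 5 * z ^ 2 + 5 * z + 1 = 0) ∧
      ¬ (∀ z : ℂ, 0 < z.re →
          z ^ 5 + 5 * z ^ 4 + 5 * z ^ 3 + 5 * z ^ 2 + 5 * z + 1 ≠ 0) := by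
  have hmain : ∃ z : ℂ, 0 < z.re ∧
      z ^ 5 + 5 * z ^ 4 + 5 * z ^ 3 + 5 * z ^ 2 + 5 * z + 1 = 0 := by
    set s : ℝ := Real.sqrt 5 with hs_def
    have hs : s ^ 2 = 5 := Real.sq_sqrt (by norm_num)
    have hs2 : (2 : ℝ) < s := by
      have : Real.sqrt 4 < Real.sqrt 5 := Real.sqrt_lt_sqrt (by norm_num) (by norm_num)
      simpa [show Real.sqrt 4 = 2 by
        rw [show (4:ℝ) = 2^2 by norm_num, Real.sqrt_sq (by norm_num)]] using this
    set y : ℝ := s - 2 with hy_def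
    have hy0 : 0 < y := by simp [hy_def]; linarith
    have hy4 : 0 < 4 - y ^ 2 := by
      have : y ^ 2 = 9 - 4 * s := by rw [hy_def]; ring_nf; linarith [hs]
      rw [this]; linarith
    set b : ℝ := Real.sqrt (4 - y ^ 2) with hb_def
    have hb : b ^ 2 = 4 - y ^ 2 := Real.sq_sqrt hy4.le
    refine ⟨(y / 2 : ℝ) + (b / 2 : ℝ) * Complex.I, ?_, ?_⟩
    · simp [Complex.add_re, Complex.mul_re]
      linarith
    · have hbC : ((b : ℂ)) ^ 2 = 4 - (y : ℂ) ^ 2 := by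
        have := congrArg (fun t : ℝ => (t : ℂ)) hb
        push_cast at this
        exact this
      have hI : (Complex.I) ^ 2 = -1 := Complex.I_sq
      have hz : ((y / 2 : ℝ) + (b / 2 : ℝ) * Complex.I) ^ 2
          - (y : ℂ) * ((y / 2 : ℝ) + (b / 2 : ℝ) * Complex.I) + 1 = 0 := by
        push_cast
        linear_combination ((b : ℂ) ^ 2 / 4) * hI - (1 / 4 : ℂ) * hbC
      have hsC : ((s : ℂ)) ^ 2 = 5 := by
        have := congrArg (fun t : ℝ => (t : ℂ)) hs
        push_cast at this
        exact this
      have hyC : (y : ℂ) = (s : ℂ) - 2 := by push_cast [hy_def]; ring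
      set z : ℂ := (y / 2 : ℝ) + (b / 2 : ℝ) * Complex.I with hz_def
      -- p(z) = (z+1)*((z+1)^4 - s^2 z^2) + (s^2-5) z^2 (z+1), and
      -- (z+1)^4 - s^2 z^2 = ((z^2+2z+1) + s z)((z^2+2z+1) - s z)
      -- while hz says (z^2+2z+1) - s z = 0 (since y = s-2).
      have hz' : z ^ 2 - ((s : ℂ) - 2) * z + 1 = 0 := by rw [← hyC]; exact hz
      linear_combination ((z + 1) * (z ^ 2 + 2 * z + 1 + (s : ℂ) * z)) * hz'
        + (z ^ 2 * (z + 1)) * hsC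
  refine ⟨hmain, ?_⟩
  intro h
  obtain ⟨z, hz1, hz2⟩ := hmain
  exact h z hz1 hz2
end

section
/- The polynomial 12x⁴ + 8x³ + 9x² + 6x + 1 has a complex root with strictly positive real part; in particular it is not Hurwitz stable. Moreover, its coefficient sequence (1, 6, 9, 8, 12) is not unimodal. -/
/-!
The quartic factors as `(2z + 1)(6z³ + z² + 4z + 1)`. The cubic factor changes sign on
`[-1/4, -1/6]`, so it has a real root `r < -1/6`; dividing it by `z - r` leaves a real quadratic
with negative discriminant, whose two complex roots have real part `-(1 + 6r)/12 > 0`.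

The coefficient sequence dips from `9` to `8` before rising to `12`, which no unimodal
sequence does.
-/

open Complex

theorem Complex.exists_quadratic_eq_zero_re_of_discrim_neg {a b c : ℝ} (ha : a ≠ 0)
    (hd : discrim a b c < 0) :
    ∃ z : ℂ, z.re = -b / (2 * a) ∧ a * z ^ 2 + b * z + c = 0 := by
  obtain ⟨t, ht⟩ : ∃ t : ℝ, t * t = -discrim a b c :=
    ⟨_, Real.mul_self_sqrt (neg_nonneg.2 hd.le)⟩
  have hs : discrim (a : ℂ) b c = (t * I) * (t * I) := by
    have h := congrArg ofReal ht
    simp only [discrim] at h ⊢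
    push_cast at h
    linear_combination h - (t : ℂ) ^ 2 * I_sq
  refine ⟨(-b + t * I) / ((2 * a : ℝ) : ℂ), by rw [div_ofReal_re]; simp, ?_⟩
  push_cast
  rw [sq]
  exact (quadratic_eq_zero_iff (by exact_mod_cast ha) hs _).2 (Or.inl rfl)

theorem not_exists_unimodal_of_dip {ι α : Type*} [LinearOrder ι] [Preorder α] {f : ι → α}
    {i j l : ι} (hij : i ≤ j) (hjl : j ≤ l) (hi : f j < f i) (hl : f j < f l) :
    ¬ ∃ k, (∀ a b, a ≤ b → b ≤ k → f a ≤ f b) ∧ (∀ a b, k ≤ a → a ≤ b → f b ≤ f a) := by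
  rintro ⟨k, hup, hdown⟩
  rcases le_total j k with hjk | hkj
  · exact (hup i j hij hjk).not_gt hi
  · exact (hdown j l hkj hjl).not_gt hl

theorem exists_cubic_root_lt : ∃ r : ℝ, r < -1 / 6 ∧ 6 * r ^ 3 + r ^ 2 + 4 * r + 1 = 0 := by
  have hcont : ContinuousOn (fun r : ℝ => 6 * r ^ 3 + r ^ 2 + 4 * r + 1)
      (Set.Icc (-1 / 4) (-1 / 6)) := by fun_prop
  obtain ⟨r, hr, hr0⟩ := intermediate_value_Ioo (by norm_num) hcont
    (show (0 : ℝ) ∈ Set.Ioo _ _ by norm_num)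
  exact ⟨r, hr.2, hr0⟩

theorem quartic_eq_mul_of_cubic_root {R : Type*} [CommRing R] {r : R}
    (hr : 6 * r ^ 3 + r ^ 2 + 4 * r + 1 = 0) (z : R) :
    12 * z ^ 4 + 8 * z ^ 3 + 9 * z ^ 2 + 6 * z + 1 =
      (2 * z + 1) * (z - r) * (6 * z ^ 2 + (1 + 6 * r) * z + (4 + r + 6 * r ^ 2)) := by
  linear_combination (2 * z + 1) * hr

theorem exists_quartic_root_re_pos :
    ∃ z : ℂ, 0 < z.re ∧ 12 * z ^ 4 + 8 * z ^ 3 + 9 * z ^ 2 + 6 * z + 1 = 0 := by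
  obtain ⟨r, hr, hr0⟩ := exists_cubic_root_lt
  obtain ⟨z, hz_re, hz⟩ := exists_quadratic_eq_zero_re_of_discrim_neg (a := 6) (b := 1 + 6 * r)
    (c := 4 + r + 6 * r ^ 2) (by norm_num) (by rw [discrim]; nlinarith [sq_nonneg (18 * r + 1)])
  refine ⟨z, by rw [hz_re]; linarith, ?_⟩
  have hrC : 6 * (r : ℂ) ^ 3 + (r : ℂ) ^ 2 + 4 * r + 1 = 0 := by exact_mod_cast hr0
  push_cast at hz
  rw [quartic_eq_mul_of_cubic_root hrC, hz, mul_zero]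

/-- `12x⁴ + 8x³ + 9x² + 6x + 1` has a complex root with strictly
positive real part (so it is not Hurwitz stable), and its coefficient sequence
`(1, 6, 9, 8, 12)` is not unimodal. -/
theorem stmt18 :
    (∃ z : ℂ, 0 < z.re ∧ 12 * z ^ 4 + 8 * z ^ 3 + 9 * z ^ 2 + 6 * z + 1 = 0) ∧
      ¬ (∀ z : ℂ, 0 < z.re → 12 * z ^ 4 + 8 * z ^ 3 + 9 * z ^ 2 + 6 * z + 1 ≠ 0) ∧
      ¬ ∃ k : Fin 5,
          (∀ i j : Fin 5, i ≤ j → j ≤ k →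
            (![(1 : ℝ), 6, 9, 8, 12]) i ≤ (![(1 : ℝ), 6, 9, 8, 12]) j) ∧
          (∀ i j : Fin 5, k ≤ i → i ≤ j →
            (![(1 : ℝ), 6, 9, 8, 12]) j ≤ (![(1 : ℝ), 6, 9, 8, 12]) i) := by
  obtain ⟨z, hz_re, hz⟩ := exists_quartic_root_re_pos
  refine ⟨⟨z, hz_re, hz⟩, fun h ↦ h z hz_re hz, ?_⟩
  exact not_exists_unimodal_of_dip (i := 2) (j := 3) (l := 4) (by decide) (by decide)
    (show (8 : ℝ) < 9 by norm_num) (show (8 : ℝ) < 12 by norm_num)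
end

section
/- Let M be a real square matrix with rows and columns indexed by a finite set E, let X ⊆ E be such that the principal submatrix M[X] is invertible, and let M*X denote the principal pivot transform of M at X: writing M in block form with M₁ = M[X] (the X×X block), M₂ (the X×(E\X) block), M₃, M₄, set M*X to have blocks M₁⁻¹, -M₁⁻¹M₂, M₃M₁⁻¹, M₄ - M₃M₁⁻¹M₂. Then for every Y ⊆ E, det((M*X)[Y]) = det(M[X △ Y]) / det(M[X]). -/
open Matrix
open scoped symmDiff

/-- Tucker's principal pivot transform `M * X` of a real matrix `M` at an index set `X`
with `M[X]` invertible: in block form, with `M₁ = M[X]`, the blocks of `M * X` are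
`M₁⁻¹`, `-M₁⁻¹M₂`, `M₃M₁⁻¹` and `M₄ - M₃M₁⁻¹M₂`. -/
noncomputable def ppt {n : ℕ} (M : Matrix (Fin n) (Fin n) ℝ) (X : Finset (Fin n)) :
    Matrix (Fin n) (Fin n) ℝ :=
  let M1 : Matrix X X ℝ := fun i j => M i.1 j.1
  let M2 : Matrix X ↥(Xᶜ) ℝ := fun i j => M i.1 j.1
  let M3 : Matrix ↥(Xᶜ) X ℝ := fun i j => M i.1 j.1
  fun i j =>
    if hi : i ∈ X then
      if hj : j ∈ X then M1⁻¹ ⟨i, hi⟩ ⟨j, hj⟩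
      else (-(M1⁻¹ * M2)) ⟨i, hi⟩ ⟨j, Finset.mem_compl.mpr hj⟩
    else
      if hj : j ∈ X then (M3 * M1⁻¹) ⟨i, Finset.mem_compl.mpr hi⟩ ⟨j, hj⟩
      else M i j - (M3 * M1⁻¹ * M2) ⟨i, Finset.mem_compl.mpr hi⟩ ⟨j, Finset.mem_compl.mpr hj⟩

/-!
Let `E_S(M)` be the identity matrix with its rows indexed by `S` replaced by those of `M`.
In block form along `S ⊕ Sᶜ` it is `[[M[S], *], [0, 1]]`, so `det E_S(M) = det M[S]`.
With `M₁ = M[X]`, the blocks along `X ⊕ Xᶜ` multiply as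
`[[M₁⁻¹, -M₁⁻¹M₂], [M₃M₁⁻¹, M₄ - M₃M₁⁻¹M₂]] · [[M₁, M₂], [0, 1]] = [[1, 0], [M₃, M₄]]`,
i.e. `(M * X) · E_X(M) = E_{Xᶜ}(M)`. As `E_Y(N) · A` takes its rows in `Y` from `N · A` and the
others from `A`, this gives `E_Y(M * X) · E_X(M) = E_{X △ Y}(M)`; take determinants.
-/

open Finset

section ReplaceRows

variable {ι R : Type*} [DecidableEq ι] [CommRing R]

def replaceRows (M : Matrix ι ι R) (S : Finset ι) : Matrix ι ι R :=
  of fun i => if i ∈ S then M i else (1 : Matrix ι ι R) i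

lemma replaceRows_apply_of_mem {M : Matrix ι ι R} {S : Finset ι} {i : ι} (hi : i ∈ S) (j : ι) :
    replaceRows M S i j = M i j := by
  simp [replaceRows, hi]

lemma replaceRows_apply_of_notMem {M : Matrix ι ι R} {S : Finset ι} {i : ι} (hi : i ∉ S)
    (j : ι) : replaceRows M S i j = (1 : Matrix ι ι R) i j := by
  simp [replaceRows, hi]

variable [Fintype ι]

lemma replaceRows_mul (N A : Matrix ι ι R) (Y : Finset ι) :
    replaceRows N Y * A = of fun i => if i ∈ Y then (N * A) i else A i := by
  ext i j
  by_cases hi : i ∈ Y <;> simp [replaceRows, hi, mul_apply, one_apply]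

def sumComplEquiv (X : Finset ι) : X ⊕ ↥(Xᶜ) ≃ ι :=
  (Equiv.sumCongr (Equiv.refl X) (Equiv.subtypeEquivRight fun _ => mem_compl)).trans
    (Equiv.sumCompl (· ∈ X))

@[simp]
lemma sumComplEquiv_inl (X : Finset ι) (i : X) : sumComplEquiv X (Sum.inl i) = i := rfl

@[simp]
lemma sumComplEquiv_inr (X : Finset ι) (i : ↥(Xᶜ)) : sumComplEquiv X (Sum.inr i) = i := rfl

abbrev subblock (M : Matrix ι ι R) (I J : Finset ι) : Matrix I J R :=
  M.submatrix Subtype.val Subtype.val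

lemma replaceRows_submatrix_sumComplEquiv (M : Matrix ι ι R) (S : Finset ι) :
    (replaceRows M S).submatrix (sumComplEquiv S) (sumComplEquiv S) =
      fromBlocks (psub M S) (subblock M S Sᶜ) 0 1 := by
  ext (i | i) (j | j)
  · simp [replaceRows_apply_of_mem, psub]
  · simp [replaceRows_apply_of_mem]
  · have hij : (i : ι) ≠ j := fun h => (mem_compl.mp i.2) (h ▸ j.2)
    simp [replaceRows_apply_of_notMem (mem_compl.mp i.2), hij]
  · simp [replaceRows_apply_of_notMem (mem_compl.mp i.2), one_apply]

lemma replaceRows_compl_submatrix_sumComplEquiv (M : Matrix ι ι R) (X : Finset ι) :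
    (replaceRows M Xᶜ).submatrix (sumComplEquiv X) (sumComplEquiv X) =
      fromBlocks 1 0 (subblock M Xᶜ X) (subblock M Xᶜ Xᶜ) := by
  ext (i | i) (j | j)
  · simp [replaceRows_apply_of_notMem (notMem_compl.mpr i.2), one_apply]
  · have hij : (i : ι) ≠ j := fun h => (mem_compl.mp j.2) (h ▸ i.2)
    simp [replaceRows_apply_of_notMem (notMem_compl.mpr i.2), hij]
  · simp [replaceRows_apply_of_mem i.2]
  · simp [replaceRows_apply_of_mem i.2]

lemma det_replaceRows (M : Matrix ι ι R) (S : Finset ι) :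
    (replaceRows M S).det = (psub M S).det := by
  rw [← det_submatrix_equiv_self (sumComplEquiv S), replaceRows_submatrix_sumComplEquiv,
    det_fromBlocks_zero₂₁, det_one, mul_one]

end ReplaceRows

section PrincipalPivotTransform

variable {n : ℕ} {M : Matrix (Fin n) (Fin n) ℝ} {X : Finset (Fin n)}

lemma ppt_submatrix_sumComplEquiv (M : Matrix (Fin n) (Fin n) ℝ) (X : Finset (Fin n)) :
    (ppt M X).submatrix (sumComplEquiv X) (sumComplEquiv X) =
      fromBlocks (psub M X)⁻¹ (-((psub M X)⁻¹ * subblock M X Xᶜ))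
        (subblock M Xᶜ X * (psub M X)⁻¹)
        (subblock M Xᶜ Xᶜ - subblock M Xᶜ X * (psub M X)⁻¹ * subblock M X Xᶜ) := by
  ext (i | i) (j | j)
  · simp only [submatrix_apply, sumComplEquiv_inl, fromBlocks_apply₁₁]
    simp only [ppt, dif_pos i.2, dif_pos j.2]
    rfl
  · simp only [submatrix_apply, sumComplEquiv_inl, sumComplEquiv_inr, fromBlocks_apply₁₂]
    simp only [ppt, dif_pos i.2, dif_neg (mem_compl.mp j.2)]
    rfl
  · simp only [submatrix_apply, sumComplEquiv_inl, sumComplEquiv_inr, fromBlocks_apply₂₁]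
    simp only [ppt, dif_neg (mem_compl.mp i.2), dif_pos j.2]
    rfl
  · simp only [submatrix_apply, sumComplEquiv_inr, fromBlocks_apply₂₂]
    simp only [ppt, dif_neg (mem_compl.mp i.2), dif_neg (mem_compl.mp j.2)]
    rfl

lemma ppt_mul_replaceRows (hX : (psub M X).det ≠ 0) :
    ppt M X * replaceRows M X = replaceRows M Xᶜ := by
  have hinv : (psub M X)⁻¹ * psub M X = 1 := nonsing_inv_mul _ (isUnit_iff_ne_zero.mpr hX)
  apply (reindex (sumComplEquiv X).symm (sumComplEquiv X).symm).injective
  simp only [reindex_apply, Equiv.symm_symm]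
  rw [← submatrix_mul_equiv _ _ _ (sumComplEquiv X), ppt_submatrix_sumComplEquiv,
    replaceRows_submatrix_sumComplEquiv, replaceRows_compl_submatrix_sumComplEquiv,
    fromBlocks_multiply]
  congr 1 <;> simp [Matrix.mul_assoc, hinv]

lemma replaceRows_ppt_mul_replaceRows (hX : (psub M X).det ≠ 0) (Y : Finset (Fin n)) :
    replaceRows (ppt M X) Y * replaceRows M X = replaceRows M (X ∆ Y) := by
  rw [replaceRows_mul, ppt_mul_replaceRows hX]
  ext i j
  by_cases hiY : i ∈ Y <;> by_cases hiX : i ∈ X <;> simp [replaceRows, hiY, hiX, mem_symmDiff]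

end PrincipalPivotTransform

/-- for the principal pivot transform `M * X` (with `M[X]` invertible),
`det((M * X)[Y]) = det(M[X △ Y]) / det(M[X])` for every `Y`. -/
theorem stmt19 {n : ℕ} (M : Matrix (Fin n) (Fin n) ℝ) (X : Finset (Fin n))
    (hX : (psub M X).det ≠ 0) :
    ∀ Y : Finset (Fin n),
      (psub (ppt M X) Y).det = (psub M (X ∆ Y)).det / (psub M X).det := by
  intro Y
  rw [eq_div_iff hX, ← det_replaceRows, ← det_replaceRows, ← det_replaceRows, ← det_mul,
    replaceRows_ppt_mul_replaceRows hX]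
end
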